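/- Let S be a quasi-hereditary algebra with a simple-preserving duality whose partial order is minimal for the quasi-hereditary structure. If S satisfies property D (wfd(∇(λ)) = wfd(L(λ)) for all λ), then property A (μ < λ implies gfd(L(μ)) ≤ gfd(L(λ))) holds if and only if property B (μ < λ implies wfd(∇(μ)) ≤ wfd(∇(λ))) holds. -/
import Mathlib


/-!
Common definitions for formalizing "On the global and ∇-filtration dimensions of
quasi-hereditary algebras" by Erdmann and Parker.

We work with a finite-dimensional algebra `S` over a field `k`; since `S` is
finite dimensional over `k`, the finite-dimensional `S`-modules are exactly the
finitely generated ones, so we express finite-dimensionality of a module `M` as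
`Module.Finite S M`.
-/

open CategoryTheory

namespace QHPaper

variable (S : Type) [Ring S]

/-- The subquotient `B ⧸ A` associated to two submodules `A B` of `M`. -/
abbrev subquot {M : ModuleCat.{0} S} (A B : Submodule S ↥M) : Type :=
  ↥B ⧸ (Submodule.comap B.subtype A)

/-- A filtration `⊥ = f 0 ≤ f 1 ≤ ⋯ ≤ f n = ⊤` of `M` whose `i`-th section
`f (i+1) / f i` is isomorphic to the prescribed module `D i`. -/
def HasFiltrationWithSections (M : ModuleCat.{0} S) (n : ℕ)
    (f : Fin (n + 1) → Submodule S ↥M) (D : Fin n → ModuleCat.{0} S) : Prop :=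
  Monotone f ∧ f 0 = ⊥ ∧ f (Fin.last n) = ⊤ ∧
    ∀ i : Fin n, Nonempty ((subquot S (f i.castSucc) (f i.succ)) ≃ₗ[S] ↥(D i))

/-- `L` occurs as a (simple) subquotient of `M`; for `L` simple this says that `L`
is a composition factor of `M`. -/
def IsCompFactor (L M : ModuleCat.{0} S) : Prop :=
  ∃ (A B : Submodule S ↥M), A ≤ B ∧ Nonempty ((subquot S A B) ≃ₗ[S] ↥L)

/-- `L` occurs with multiplicity `m` among the sections of a composition series of `M`. -/
def CompFactorMult (L M : ModuleCat.{0} S) (m : ℕ) : Prop :=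
  ∃ (n : ℕ) (f : Fin (n + 1) → Submodule S ↥M),
    Monotone f ∧ f 0 = ⊥ ∧ f (Fin.last n) = ⊤ ∧
    (∀ i : Fin n, IsSimpleModule S (subquot S (f i.castSucc) (f i.succ))) ∧
    Nat.card {i : Fin n // Nonempty ((subquot S (f i.castSucc) (f i.succ)) ≃ₗ[S] ↥L)} = m

/-- `P` is a projective cover of `M`: `P` is projective and there is a surjection
`P → M` whose kernel is superfluous in `P`. -/
def IsProjCover (P M : ModuleCat.{0} S) : Prop :=
  Module.Projective S ↥P ∧ ∃ π : ↥P →ₗ[S] ↥M, Function.Surjective π ∧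
    ∀ N : Submodule S ↥P, N ⊔ LinearMap.ker π = ⊤ → N = ⊤

/-- `I` is an injective hull of `M`: `I` is injective and there is an injection
`M → I` with essential image. -/
def IsInjHull (I M : ModuleCat.{0} S) : Prop :=
  Module.Injective S ↥I ∧ ∃ ι : ↥M →ₗ[S] ↥I, Function.Injective ι ∧
    ∀ N : Submodule S ↥I, N ⊓ LinearMap.range ι = ⊥ → N = ⊥

/-- The data of a quasi-hereditary algebra structure on `S` with weight poset `Λ`:
a full set `L` of pairwise non-isomorphic simple modules, their projective covers `P`
and injective hulls `I`, the standard modules `std` (largest quotient of `P lam` with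
all composition factors `L mu`, `mu ≤ lam`), the costandard modules `costd`
(largest submodule of `I lam` with all composition factors `L mu`, `mu ≤ lam`),
such that `L lam` occurs exactly once in `std lam` and `P lam` is filtered by
standard modules `std mu` with `mu ≥ lam`, with `std lam` occurring exactly once. -/
structure QHData (Λ : Type) [Fintype Λ] [PartialOrder Λ] where
  L : Λ → ModuleCat.{0} S
  P : Λ → ModuleCat.{0} S
  I : Λ → ModuleCat.{0} S
  std : Λ → ModuleCat.{0} S
  costd : Λ → ModuleCat.{0} S
  finiteL : ∀ lam, Module.Finite S ↥(L lam)
  simpleL : ∀ lam, IsSimpleModule S ↥(L lam)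
  nonisoL : ∀ lam mu, lam ≠ mu → IsEmpty (↥(L lam) ≃ₗ[S] ↥(L mu))
  fullL : ∀ M : ModuleCat.{0} S, IsSimpleModule S ↥M → ∃ lam, Nonempty (↥M ≃ₗ[S] ↥(L lam))
  projCover : ∀ lam, IsProjCover S (P lam) (L lam)
  injHull : ∀ lam, IsInjHull S (I lam) (L lam)
  stdSpec : ∀ lam, ∃ K : Submodule S ↥(P lam),
    Nonempty (↥(std lam) ≃ₗ[S] (↥(P lam) ⧸ K)) ∧
    (∀ mu, IsCompFactor S (L mu) (ModuleCat.of S (↥(P lam) ⧸ K)) → mu ≤ lam) ∧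
    ∀ K' : Submodule S ↥(P lam),
      (∀ mu, IsCompFactor S (L mu) (ModuleCat.of S (↥(P lam) ⧸ K')) → mu ≤ lam) → K ≤ K'
  costdSpec : ∀ lam, ∃ V : Submodule S ↥(I lam),
    Nonempty (↥(costd lam) ≃ₗ[S] ↥V) ∧
    (∀ mu, IsCompFactor S (L mu) (ModuleCat.of S ↥V) → mu ≤ lam) ∧
    ∀ V' : Submodule S ↥(I lam),
      (∀ mu, IsCompFactor S (L mu) (ModuleCat.of S ↥V') → mu ≤ lam) → V' ≤ V
  multOne : ∀ lam, CompFactorMult S (L lam) (std lam) 1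
  projFilt : ∀ lam, ∃ (n : ℕ) (f : Fin (n + 1) → Submodule S ↥(P lam)) (g : Fin n → Λ),
    HasFiltrationWithSections S (P lam) n f (fun i => std (g i)) ∧
    (∀ i, lam ≤ g i) ∧ Nat.card {i : Fin n // g i = lam} = 1

variable {Λ : Type} [Fintype Λ] [PartialOrder Λ]

/-- `M` has a filtration with costandard sections, i.e. `M ∈ F(∇)`. -/
def InCostdFilt (Q : QHData S Λ) (M : ModuleCat.{0} S) : Prop :=
  ∃ (n : ℕ) (f : Fin (n + 1) → Submodule S ↥M) (g : Fin n → Λ),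
    HasFiltrationWithSections S M n f (fun i => Q.costd (g i))

/-- `M` has a filtration with standard sections, i.e. `M ∈ F(Δ)`. -/
def InStdFilt (Q : QHData S Λ) (M : ModuleCat.{0} S) : Prop :=
  ∃ (n : ℕ) (f : Fin (n + 1) → Submodule S ↥M) (g : Fin n → Λ),
    HasFiltrationWithSections S M n f (fun i => Q.std (g i))

/-- `0 → N 0 → N 1 → ⋯ → N (n+1) → 0` is exact. -/
def IsExactSeq (n : ℕ) (N : Fin (n + 2) → ModuleCat.{0} S)
    (f : ∀ i : Fin (n + 1), ↥(N i.castSucc) →ₗ[S] ↥(N i.succ)) : Prop :=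
  Function.Injective (f 0) ∧ Function.Surjective (f (Fin.last n)) ∧
    ∀ i : Fin n, LinearMap.range (f i.castSucc) = LinearMap.ker (f i.succ)

/-- `M` has a ∇-resolution (co-resolution by modules in `F(∇)`) of length `d`:
`0 → M → M₀ → ⋯ → M_d → 0` with each `Mᵢ ∈ F(∇)`. -/
def GfdLE (Q : QHData S Λ) (M : ModuleCat.{0} S) (d : ℕ) : Prop :=
  ∃ (N : Fin (d + 2) → ModuleCat.{0} S)
    (f : ∀ i : Fin (d + 1), ↥(N i.castSucc) →ₗ[S] ↥(N i.succ)),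
    IsExactSeq S d N f ∧ N 0 = M ∧ ∀ i : Fin (d + 1), InCostdFilt S Q (N i.succ)

/-- The ∇-filtration dimension (good filtration dimension) of a module. -/
noncomputable def gfd (Q : QHData S Λ) (M : ModuleCat.{0} S) : ℕ :=
  sInf {d | GfdLE S Q M d}

/-- `M` has a resolution `0 → M_d → ⋯ → M₀ → M → 0` with each `Mᵢ ∈ F(Δ)`. -/
def WfdLE (Q : QHData S Λ) (M : ModuleCat.{0} S) (d : ℕ) : Prop :=
  ∃ (N : Fin (d + 2) → ModuleCat.{0} S)
    (f : ∀ i : Fin (d + 1), ↥(N i.castSucc) →ₗ[S] ↥(N i.succ)),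
    IsExactSeq S d N f ∧ N (Fin.last (d + 1)) = M ∧
    ∀ i : Fin (d + 1), InStdFilt S Q (N i.castSucc)

/-- The Δ-filtration dimension of a module. -/
noncomputable def wfd (Q : QHData S Λ) (M : ModuleCat.{0} S) : ℕ :=
  sInf {d | WfdLE S Q M d}

/-- `M` has a projective resolution of length `d`. -/
def ProjdimLE (M : ModuleCat.{0} S) (d : ℕ) : Prop :=
  ∃ (N : Fin (d + 2) → ModuleCat.{0} S)
    (f : ∀ i : Fin (d + 1), ↥(N i.castSucc) →ₗ[S] ↥(N i.succ)),
    IsExactSeq S d N f ∧ N (Fin.last (d + 1)) = M ∧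
    ∀ i : Fin (d + 1), Module.Projective S ↥(N i.castSucc)

/-- The projective dimension of a module. -/
noncomputable def projdim (M : ModuleCat.{0} S) : ℕ :=
  sInf {d | ProjdimLE S M d}

/-- `M` has an injective resolution of length `d`. -/
def InjdimLE (M : ModuleCat.{0} S) (d : ℕ) : Prop :=
  ∃ (N : Fin (d + 2) → ModuleCat.{0} S)
    (f : ∀ i : Fin (d + 1), ↥(N i.castSucc) →ₗ[S] ↥(N i.succ)),
    IsExactSeq S d N f ∧ N 0 = M ∧
    ∀ i : Fin (d + 1), Module.Injective S ↥(N i.succ)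

/-- The injective dimension of a module. -/
noncomputable def injdim (M : ModuleCat.{0} S) : ℕ :=
  sInf {d | InjdimLE S M d}

/-- `gfd(S)`: the supremum of the ∇-filtration dimensions of all
finite-dimensional `S`-modules. -/
noncomputable def gfdAlg (Q : QHData S Λ) : ℕ :=
  sSup {d | ∃ M : ModuleCat.{0} S, Module.Finite S ↥M ∧ gfd S Q M = d}

/-- `wfd(S)`: the supremum of the Δ-filtration dimensions of all
finite-dimensional `S`-modules. -/
noncomputable def wfdAlg (Q : QHData S Λ) : ℕ :=
  sSup {d | ∃ M : ModuleCat.{0} S, Module.Finite S ↥M ∧ wfd S Q M = d}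

/-- The global dimension of `S`: the supremum of the projective dimensions of all
finite-dimensional `S`-modules. -/
noncomputable def globdim : ℕ :=
  sSup {d | ∃ M : ModuleCat.{0} S, Module.Finite S ↥M ∧ projdim S M = d}

/-- `Ext^n_S(A, B) ≠ 0`. -/
noncomputable def extNe (A B : ModuleCat.{0} S) (n : ℕ) : Prop :=
  Nontrivial ↥(((Ext ℤ (ModuleCat.{0} S) n).obj (Opposite.op A)).obj B)

/-- A simple-preserving duality on `S`: a contravariant, exact, fully faithful,
additive self-functor `D` on the category of finite-dimensional `S`-modules with
`D (D M) ≅ M` and `D (L lam) ≅ L lam` for all `lam`. -/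
structure Duality (Q : QHData S Λ) where
  D : ModuleCat.{0} S → ModuleCat.{0} S
  Dmap : ∀ {A B : ModuleCat.{0} S}, (↥A →ₗ[S] ↥B) → (↥(D B) →ₗ[S] ↥(D A))
  finD : ∀ M : ModuleCat.{0} S, Module.Finite S ↥M → Module.Finite S ↥(D M)
  Did : ∀ A : ModuleCat.{0} S, Module.Finite S ↥A →
    Dmap (LinearMap.id : ↥A →ₗ[S] ↥A) = LinearMap.id
  Dcomp : ∀ {A B C : ModuleCat.{0} S}, Module.Finite S ↥A → Module.Finite S ↥B →
    Module.Finite S ↥C → ∀ (f : ↥A →ₗ[S] ↥B) (g : ↥B →ₗ[S] ↥C),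
      Dmap (g ∘ₗ f) = Dmap f ∘ₗ Dmap g
  Dadd : ∀ {A B : ModuleCat.{0} S}, Module.Finite S ↥A → Module.Finite S ↥B →
    ∀ (f g : ↥A →ₗ[S] ↥B), Dmap (f + g) = Dmap f + Dmap g
  Dfull : ∀ {A B : ModuleCat.{0} S}, Module.Finite S ↥A → Module.Finite S ↥B →
    Function.Bijective (fun f : ↥A →ₗ[S] ↥B => Dmap f)
  Dexact : ∀ {A B C : ModuleCat.{0} S}, Module.Finite S ↥A → Module.Finite S ↥B →
    Module.Finite S ↥C → ∀ (f : ↥A →ₗ[S] ↥B) (g : ↥B →ₗ[S] ↥C),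
      Function.Injective f → Function.Surjective g →
      LinearMap.range f = LinearMap.ker g →
      Function.Injective (Dmap g) ∧ Function.Surjective (Dmap f) ∧
        LinearMap.range (Dmap g) = LinearMap.ker (Dmap f)
  Dinvol : ∀ M : ModuleCat.{0} S, Module.Finite S ↥M → Nonempty (↥(D (D M)) ≃ₗ[S] ↥M)
  DL : ∀ lam, Nonempty (↥(D (Q.L lam)) ≃ₗ[S] ↥(Q.L lam))

/-- Strong property A: `mu < lam` implies `gfd (L mu) < gfd (L lam)`. -/
def StrongPropA (Q : QHData S Λ) : Prop :=
  ∀ mu lam : Λ, mu < lam → gfd S Q (Q.L mu) < gfd S Q (Q.L lam)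

/-- Property A: `mu < lam` implies `gfd (L mu) ≤ gfd (L lam)`. -/
def PropA (Q : QHData S Λ) : Prop :=
  ∀ mu lam : Λ, mu < lam → gfd S Q (Q.L mu) ≤ gfd S Q (Q.L lam)

/-- Property B: `mu < lam` implies `wfd (∇ mu) ≤ wfd (∇ lam)`. -/
def PropB (Q : QHData S Λ) : Prop :=
  ∀ mu lam : Λ, mu < lam → wfd S Q (Q.costd mu) ≤ wfd S Q (Q.costd lam)

/-- Property C: `wfd (∇ lam) = gfd S - inj (∇ lam)` for all `lam`. -/
def PropC (Q : QHData S Λ) : Prop :=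
  ∀ lam : Λ, wfd S Q (Q.costd lam) = gfdAlg S Q - injdim S (Q.costd lam)

/-- Property D: `wfd (∇ lam) = wfd (L lam)` for all `lam`. -/
def PropD (Q : QHData S Λ) : Prop :=
  ∀ lam : Λ, wfd S Q (Q.costd lam) = wfd S Q (Q.L lam)

/-- Property E: `mu < lam` implies `inj (∇ mu) ≥ inj (∇ lam)`. -/
def PropE (Q : QHData S Λ) : Prop :=
  ∀ mu lam : Λ, mu < lam → injdim S (Q.costd lam) ≤ injdim S (Q.costd mu)

/-- The partial order is minimal for the quasi-hereditary structure: whenever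
`mu < lam` are adjacent, `L mu` is a composition factor of `Δ lam` or of `∇ lam`. -/
def MinimalOrder (Q : QHData S Λ) : Prop :=
  ∀ mu lam : Λ, mu < lam → (¬ ∃ nu, mu < nu ∧ nu < lam) →
    IsCompFactor S (Q.L mu) (Q.std lam) ∨ IsCompFactor S (Q.L mu) (Q.costd lam)

/-- `S` is connected (indecomposable as an algebra, i.e. one block): the only
central idempotents are `0` and `1`. -/
def ConnectedRing : Prop :=
  ∀ c : S, c * c = c → (∀ s : S, c * s = s * c) → c = 0 ∨ c = 1

/-- A tilting module: a module in `F(Δ) ∩ F(∇)`. -/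
def IsTilting (Q : QHData S Λ) (T : ModuleCat.{0} S) : Prop :=
  InStdFilt S Q T ∧ InCostdFilt S Q T

/-- The indecomposable tilting module `T(lam)`: an indecomposable tilting module in
which `L lam` occurs exactly once and all other composition factors `L mu` have
`mu < lam`. -/
def IsIndecTilting (Q : QHData S Λ) (lam : Λ) (T : ModuleCat.{0} S) : Prop :=
  IsTilting S Q T ∧ Nontrivial ↥T ∧
    (∀ A B : Submodule S ↥T, IsCompl A B → A = ⊥ ∨ B = ⊥) ∧
    CompFactorMult S (Q.L lam) T 1 ∧
    ∀ mu, IsCompFactor S (Q.L mu) T → mu = lam ∨ mu < lam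

/-- A full tilting module: a (finite-dimensional) tilting module having every
indecomposable tilting module as a direct summand. -/
def IsFullTilting (Q : QHData S Λ) (T : ModuleCat.{0} S) : Prop :=
  IsTilting S Q T ∧ Module.Finite S ↥T ∧
    ∀ (lam : Λ) (Tl : ModuleCat.{0} S), IsIndecTilting S Q lam Tl →
      ∃ Cc : ModuleCat.{0} S, Nonempty (↥T ≃ₗ[S] (↥Tl × ↥Cc))

/-- The Ringel dual ring `S' = End_S(T)^op`. -/
abbrev RingelDualRing (T : ModuleCat.{0} S) : Type := (Module.End S ↥T)ᵐᵒᵖ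

/-- `Hom_S(T, X)` is a module over `S' = End_S(T)^op` via `f • φ = φ ∘ f`. -/
instance homTModule (T X : ModuleCat.{0} S) :
    Module (RingelDualRing S T) (↥T →ₗ[S] ↥X) where
  smul a φ := φ ∘ₗ a.unop
  one_smul φ := rfl
  mul_smul a b φ := rfl
  smul_zero a := rfl
  smul_add a φ ψ := rfl
  add_smul a b φ := by
    ext x
    show φ ((a.unop + b.unop) x) = φ (a.unop x) + φ (b.unop x)
    rw [LinearMap.add_apply, map_add]
  zero_smul φ := by
    ext x
    show φ ((0 : Module.End S ↥T) x) = 0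
    rw [LinearMap.zero_apply, map_zero]

/-- The `S'`-module `Hom_S(T, X)`, i.e. the image of `X` under the functor
`F = Hom_S(T, -)`. -/
noncomputable def homTMod (T X : ModuleCat.{0} S) :
    ModuleCat.{0} (RingelDualRing S T) :=
  ModuleCat.of (RingelDualRing S T) (↥T →ₗ[S] ↥X)

/-- `Q'` is a Ringel dual quasi-hereditary structure for `(Q, T)`:
`T` is a full tilting module, `Q'` is a quasi-hereditary structure on
`S' = End_S(T)^op` for the opposite poset, and its standard modules are
`Δ'(lam) = Hom_S(T, ∇(lam))`. -/
def IsRingelDualData (Q : QHData S Λ) (T : ModuleCat.{0} S)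
    (Q' : QHData (RingelDualRing S T) Λᵒᵈ) : Prop :=
  IsFullTilting S Q T ∧
    ∀ lam : Λ, Nonempty
      (↥(Q'.std (OrderDual.toDual lam)) ≃ₗ[RingelDualRing S T]
        (↥T →ₗ[S] ↥(Q.costd lam)))

/-- `0 → T_d → ⋯ → T_0 → M → 0` exact with all `T_i` tilting modules. -/
def TiltResLE (Q : QHData S Λ) (M : ModuleCat.{0} S) (d : ℕ) : Prop :=
  ∃ (N : Fin (d + 2) → ModuleCat.{0} S)
    (f : ∀ i : Fin (d + 1), ↥(N i.castSucc) →ₗ[S] ↥(N i.succ)),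
    IsExactSeq S d N f ∧ N (Fin.last (d + 1)) = M ∧
    ∀ i : Fin (d + 1), IsTilting S Q (N i.castSucc)

/-- An idempotent `e` is primitive if it is nonzero and is not the sum of two
nonzero orthogonal idempotents. -/
def IsPrimitiveIdempotent (e : S) : Prop :=
  e * e = e ∧ e ≠ 0 ∧ ∀ a b : S, a * a = a → b * b = b → a * b = 0 → b * a = 0 →
    e = a + b → a = 0 ∨ b = 0

/-- The additive subgroup `e•M = {m | e • m = m}` of `M` (for `e` idempotent). -/
def cornerSet (eG : S) (M : ModuleCat.{0} S) : AddSubgroup ↥M where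
  carrier := {m | eG • m = m}
  add_mem' := by
    intro a b ha hb
    simp only [Set.mem_setOf_eq] at *
    rw [smul_add, ha, hb]
  zero_mem' := by
    simp only [Set.mem_setOf_eq]
    rw [smul_zero]
  neg_mem' := by
    intro a ha
    simp only [Set.mem_setOf_eq] at *
    rw [smul_neg, ha]

/-- The `R`-module structure on `e•M`, where `ι : R → S` identifies `R` with the
corner ring `eSe` (as a non-unital ring, with `ι 1 = e`). -/
def cornerModuleStructure (R : Type) [Ring R] (ι : R →ₙ+* S) (eG : S)
    (hone : ι 1 = eG) (hrange : ∀ r : R, eG * ι r * eG = ι r)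
    (M : ModuleCat.{0} S) : Module R ↥(cornerSet S eG M) where
  smul r m := ⟨ι r • (m : ↥M), by
    have hm : eG • (m : ↥M) = (m : ↥M) := m.2
    show eG • (ι r • (m : ↥M)) = ι r • (m : ↥M)
    have h : eG • (ι r • (m : ↥M)) = (eG * ι r * eG) • (m : ↥M) := by
      rw [mul_assoc, mul_smul, mul_smul, hm]
    rw [h, hrange]⟩
  one_smul m := by
    apply Subtype.ext
    show ι 1 • (m : ↥M) = (m : ↥M)
    rw [hone]
    exact m.2
  mul_smul r s m := by
    apply Subtype.ext
    show ι (r * s) • (m : ↥M) = ι r • (ι s • (m : ↥M))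
    rw [map_mul, mul_smul]
  smul_zero r := by
    apply Subtype.ext
    show ι r • (0 : ↥M) = 0
    rw [smul_zero]
  smul_add r m n := by
    apply Subtype.ext
    show ι r • ((m : ↥M) + (n : ↥M)) = ι r • (m : ↥M) + ι r • (n : ↥M)
    rw [smul_add]
  add_smul r s m := by
    apply Subtype.ext
    show ι (r + s) • (m : ↥M) = ι r • (m : ↥M) + ι s • (m : ↥M)
    rw [map_add, add_smul]
  zero_smul m := by
    apply Subtype.ext
    show ι 0 • (m : ↥M) = 0
    rw [map_zero, zero_smul]

/-- The `R`-module `e•M`, where `R ≅ eSe` via `ι`. -/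
noncomputable def cornerMod (R : Type) [Ring R] (ι : R →ₙ+* S) (eG : S)
    (hone : ι 1 = eG) (hrange : ∀ r : R, eG * ι r * eG = ι r)
    (M : ModuleCat.{0} S) : ModuleCat.{0} R :=
  @ModuleCat.of R _ ↥(cornerSet S eG M) _
    (cornerModuleStructure S R ι eG hone hrange M)



theorem QHA.tower_finite (k : Type) {S : Type} [Field k] [Ring S] [Algebra k S]
    [FiniteDimensional k S] (M : Type) [AddCommGroup M] [Module S M] (h : Module.Finite S M) :
    IsNoetherian S M ∧ IsArtinian S M := by
  letI : Module k M := Module.compHom M (algebraMap k S)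
  haveI : IsScalarTower k S M := ⟨fun c s x => by
    rw [Algebra.smul_def, mul_smul]; rfl⟩
  haveI := h
  haveI : Module.Finite k M := Module.Finite.trans S M
  constructor
  · exact isNoetherian_of_tower k inferInstance
  · exact isArtinian_of_tower k inferInstance

theorem QHA.fin_submodule (k : Type) {S : Type} [Field k] [Ring S] [Algebra k S]
    [FiniteDimensional k S] {M : Type} [AddCommGroup M] [Module S M]
    (h : Module.Finite S M) (A : Submodule S M) : Module.Finite S ↥A := by
  haveI := (QHA.tower_finite k M h).1
  exact Module.Finite.iff_fg.mpr (IsNoetherian.noetherian A)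

theorem QHA.fin_quot {S : Type} [Ring S] {M : Type} [AddCommGroup M] [Module S M]
    (h : Module.Finite S M) (A : Submodule S M) : Module.Finite S (M ⧸ A) := by
  haveI := h
  exact Module.Finite.of_surjective A.mkQ (Submodule.mkQ_surjective A)

theorem QHA.fin_ext {S : Type} [Ring S] {M : Type} [AddCommGroup M] [Module S M]
    (A : Submodule S M) (h1 : Module.Finite S ↥A) (h2 : Module.Finite S (M ⧸ A)) :
    Module.Finite S M := by
  rw [Module.finite_def]
  apply Submodule.fg_of_fg_map_of_fg_inf_ker A.mkQ
  · rw [Submodule.map_top, Submodule.range_mkQ]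
    exact Module.finite_def.mp h2
  · rw [Submodule.ker_mkQ, top_inf_eq]
    exact Module.Finite.iff_fg.mp h1

theorem QHA.fin_subsingleton {S : Type} [Ring S] {M : Type} [AddCommGroup M] [Module S M]
    (h : Subsingleton M) : Module.Finite S M := by
  rw [Module.finite_def]
  have : (⊤ : Submodule S M) = ⊥ := Subsingleton.elim _ _
  rw [this]; exact Submodule.fg_bot

namespace QHA
open QHPaper

variable {k S : Type} [Field k] [Ring S] [Algebra k S] [FiniteDimensional k S]
variable {Λ : Type} [Fintype Λ] [PartialOrder Λ] {Q : QHData S Λ} (E : Duality S Q)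

theorem Dmap_zero {A B : ModuleCat.{0} S} (hA : Module.Finite S ↥A)
    (hB : Module.Finite S ↥B) : E.Dmap (0 : ↥A →ₗ[S] ↥B) = 0 := by
  have h := E.Dadd hA hB 0 0
  rw [add_zero] at h
  have := h.symm
  rwa [add_eq_left] at this

theorem Dmap_bijective {A B : ModuleCat.{0} S} (hA : Module.Finite S ↥A)
    (hB : Module.Finite S ↥B) (e : ↥A ≃ₗ[S] ↥B) :
    Function.Bijective (E.Dmap e.toLinearMap) := by
  have h1 : E.Dmap e.symm.toLinearMap ∘ₗ E.Dmap e.toLinearMap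
      = LinearMap.id (M := ↥(E.D B)) := by
    rw [← E.Dcomp hB hA hB e.symm.toLinearMap e.toLinearMap]
    have : e.toLinearMap ∘ₗ e.symm.toLinearMap = LinearMap.id := by
      ext x; simp
    rw [this, E.Did B hB]
  have h2 : E.Dmap e.toLinearMap ∘ₗ E.Dmap e.symm.toLinearMap
      = LinearMap.id (M := ↥(E.D A)) := by
    rw [← E.Dcomp hA hB hA e.toLinearMap e.symm.toLinearMap]
    have : e.symm.toLinearMap ∘ₗ e.toLinearMap = LinearMap.id := by
      ext x; simp
    rw [this, E.Did A hA]
  constructor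
  · intro x y hxy
    have := congrArg (E.Dmap e.symm.toLinearMap) hxy
    calc x = (E.Dmap e.symm.toLinearMap ∘ₗ E.Dmap e.toLinearMap) x := by rw [h1]; rfl
    _ = (E.Dmap e.symm.toLinearMap ∘ₗ E.Dmap e.toLinearMap) y := this
    _ = y := by rw [h1]; rfl
  · intro y
    exact ⟨E.Dmap e.symm.toLinearMap y, by
      have := congrFun (congrArg (fun (f : _ →ₗ[S] _) => (f : _ → _)) h2) y
      simpa using this⟩

noncomputable def Dequiv {A B : ModuleCat.{0} S} (hA : Module.Finite S ↥A)
    (hB : Module.Finite S ↥B) (e : ↥A ≃ₗ[S] ↥B) : ↥(E.D B) ≃ₗ[S] ↥(E.D A) :=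
  LinearEquiv.ofBijective (E.Dmap e.toLinearMap) (Dmap_bijective E hA hB e)

include k in
theorem Dmap_injective {A B : ModuleCat.{0} S} (hA : Module.Finite S ↥A)
    (hB : Module.Finite S ↥B) (f : ↥A →ₗ[S] ↥B) (hf : Function.Surjective f) :
    Function.Injective (E.Dmap f) := by
  have hK : Module.Finite S ↥(ModuleCat.of S ↥(LinearMap.ker f)) :=
    QHA.fin_submodule k hA _
  exact (E.Dexact hK hA hB ((LinearMap.ker f).subtype) f
    (Submodule.injective_subtype _) hf (Submodule.range_subtype _)).1

omit [Field k] [Algebra k S] [FiniteDimensional k S] in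
theorem Dmap_surjective {A B : ModuleCat.{0} S} (hA : Module.Finite S ↥A)
    (hB : Module.Finite S ↥B) (f : ↥A →ₗ[S] ↥B) (hf : Function.Injective f) :
    Function.Surjective (E.Dmap f) := by
  have hQ : Module.Finite S ↥(ModuleCat.of S (↥B ⧸ LinearMap.range f)) :=
    QHA.fin_quot hB _
  exact (E.Dexact hA hB hQ f ((LinearMap.range f).mkQ) hf
    (Submodule.mkQ_surjective _) (Submodule.ker_mkQ _).symm).2.1

theorem subsingleton_of_D {A : ModuleCat.{0} S} (hA : Module.Finite S ↥A)
    (h : Subsingleton ↥(E.D A)) : Subsingleton ↥A := by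
  have hDA : Module.Finite S ↥(E.D A) := E.finD A hA
  have h0 : (LinearMap.id : ↥(E.D A) →ₗ[S] ↥(E.D A)) = 0 := Subsingleton.elim _ _
  have h1 : (LinearMap.id : ↥(E.D (E.D A)) →ₗ[S] ↥(E.D (E.D A))) = 0 := by
    rw [← E.Did (E.D A) hDA, h0, Dmap_zero E hDA hDA]
  have h2 : Subsingleton ↥(E.D (E.D A)) := by
    constructor
    intro x y
    have hx : x = 0 := by
      have := congrFun (congrArg (fun (f : _ →ₗ[S] _) => (f : _ → _)) h1) x
      simpa using this
    have hy : y = 0 := by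
      have := congrFun (congrArg (fun (f : _ →ₗ[S] _) => (f : _ → _)) h1) y
      simpa using this
    rw [hx, hy]
  obtain ⟨e⟩ := E.Dinvol A hA
  exact e.symm.toEquiv.subsingleton

end QHA

namespace QHA
open QHPaper
set_option linter.unusedSectionVars false

variable {k S : Type} [Field k] [Ring S] [Algebra k S] [FiniteDimensional k S]
variable {Λ : Type} [Fintype Λ] [PartialOrder Λ] {Q : QHData S Λ} (E : Duality S Q)

/-- subquotient of a quotient: for surjective `φ : M₁ → M₂` and `W ≤ M₂`,
`(comap φ W) / (ker φ) ≃ W`. -/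
noncomputable def subquotOfSurj {M₁ M₂ : ModuleCat.{0} S} (φ : ↥M₁ →ₗ[S] ↥M₂)
    (hφ : Function.Surjective φ) (W : Submodule S ↥M₂) :
    (subquot S (LinearMap.ker φ) (Submodule.comap φ W)) ≃ₗ[S] ↥W := by
  set B := Submodule.comap φ W with hB
  have hmem : ∀ x : ↥B, φ (B.subtype x) ∈ W := fun x => x.2
  set ρ : ↥B →ₗ[S] ↥W := LinearMap.codRestrict W (φ ∘ₗ B.subtype) hmem with hρ
  have hsurj : Function.Surjective ρ := by
    rintro ⟨w, hw⟩
    obtain ⟨x, hx⟩ := hφ w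
    exact ⟨⟨x, by simp [hB, Submodule.mem_comap, hx, hw]⟩, Subtype.ext hx⟩
  have hker : Submodule.comap B.subtype (LinearMap.ker φ) = LinearMap.ker ρ := by
    ext x
    simp [hρ, LinearMap.mem_ker, Submodule.mem_comap, LinearMap.codRestrict,
      Subtype.ext_iff]
  exact (Submodule.quotEquivOfEq _ _ hker).trans (ρ.quotKerEquivOfSurjective hsurj)

/-- transporting a subquotient along a linear equivalence. -/
noncomputable def subquotMapEquiv {X Y : ModuleCat.{0} S} (e : ↥X ≃ₗ[S] ↥Y)
    (A B : Submodule S ↥X) :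
    (subquot S A B) ≃ₗ[S]
      (subquot S (Submodule.map (e : ↥X →ₗ[S] ↥Y) A) (Submodule.map (e : ↥X →ₗ[S] ↥Y) B)) := by
  set A' := Submodule.map (e : ↥X →ₗ[S] ↥Y) A
  set B' := Submodule.map (e : ↥X →ₗ[S] ↥Y) B
  have hmem : ∀ x : ↥B, e (B.subtype x) ∈ B' := fun x => ⟨x, x.2, rfl⟩
  set τ : ↥B →ₗ[S] ↥B' := LinearMap.codRestrict B' ((e : ↥X →ₗ[S] ↥Y) ∘ₗ B.subtype) hmem
  set ρ : ↥B →ₗ[S] subquot S A' B' := (Submodule.comap B'.subtype A').mkQ ∘ₗ τ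
  have hsurj : Function.Surjective ρ := by
    apply Function.Surjective.comp (Submodule.mkQ_surjective _)
    rintro ⟨y, x, hx, rfl⟩
    exact ⟨⟨x, hx⟩, rfl⟩
  have hker : LinearMap.ker ρ = Submodule.comap B.subtype A := by
    ext x
    have : ρ x = 0 ↔ e x.1 ∈ A' := by
      simp [ρ, τ, LinearMap.codRestrict, Submodule.Quotient.mk_eq_zero]
    simp only [LinearMap.mem_ker, this, Submodule.mem_comap]
    constructor
    · rintro ⟨a, ha, hax⟩
      have : a = x.1 := e.injective hax
      subst this; exact ha
    · intro h; exact ⟨x.1, h, rfl⟩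
  exact (Submodule.quotEquivOfEq _ _ hker.symm).trans (ρ.quotKerEquivOfSurjective hsurj)

theorem isCompFactor_congr {L X Y : ModuleCat.{0} S} (e : ↥X ≃ₗ[S] ↥Y)
    (h : IsCompFactor S L X) : IsCompFactor S L Y := by
  obtain ⟨A, B, hAB, ⟨q⟩⟩ := h
  refine ⟨Submodule.map (e : ↥X →ₗ[S] ↥Y) A, Submodule.map (e : ↥X →ₗ[S] ↥Y) B,
    Submodule.map_mono hAB, ⟨((subquotMapEquiv e A B).symm).trans q⟩⟩

end QHA

namespace QHA
open QHPaper
set_option linter.unusedSectionVars false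

variable {k S : Type} [Field k] [Ring S] [Algebra k S] [FiniteDimensional k S]
variable {Λ : Type} [Fintype Λ] [PartialOrder Λ] {Q : QHData S Λ} (E : Duality S Q)

include k in
theorem isCompFactor_of_D {X : ModuleCat.{0} S} (hX : Module.Finite S ↥X) (mu : Λ)
    (h : IsCompFactor S (Q.L mu) (E.D X)) : IsCompFactor S (Q.L mu) X := by
  have hDX : Module.Finite S ↥(E.D X) := E.finD X hX
  have hDDX : Module.Finite S ↥(E.D (E.D X)) := E.finD _ hDX
  obtain ⟨A, B, hAB, ⟨q⟩⟩ := h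
  -- Bc : B as a ModuleCat
  set Bc : ModuleCat.{0} S := ModuleCat.of S ↥B with hBc
  have hB : Module.Finite S ↥Bc := QHA.fin_submodule k hDX B
  -- φ : D(D X) → D(Bc), dual of the inclusion, surjective
  set φ : ↥(E.D (E.D X)) →ₗ[S] ↥(E.D Bc) :=
    E.Dmap (A := Bc) (B := E.D X) B.subtype with hφdef
  have hφ : Function.Surjective φ :=
    Dmap_surjective E hB hDX B.subtype (Submodule.injective_subtype B)
  -- sq : the subquotient as ModuleCat, with surjection s : Bc → sq
  set sq : ModuleCat.{0} S := ModuleCat.of S (subquot S A B) with hsq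
  have hsqfin : Module.Finite S ↥sq := QHA.fin_quot hB _
  set s : ↥Bc →ₗ[S] ↥sq := (Submodule.comap B.subtype A).mkQ with hsdef
  have hs : Function.Surjective s := Submodule.mkQ_surjective _
  set ψ : ↥(E.D sq) →ₗ[S] ↥(E.D Bc) := E.Dmap (A := Bc) (B := sq) s with hψdef
  have hψ : Function.Injective ψ := Dmap_injective (k := k) E hB hsqfin s hs
  set W : Submodule S ↥(E.D Bc) := LinearMap.range ψ with hW
  have hLfin : Module.Finite S ↥(Q.L mu) := Q.finiteL mu
  have key : IsCompFactor S (Q.L mu) (E.D (E.D X)) := by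
    refine ⟨LinearMap.ker φ, Submodule.comap φ W, ?_, ?_⟩
    · intro x hx
      simp only [Submodule.mem_comap]
      rw [LinearMap.mem_ker.mp hx]
      exact Submodule.zero_mem W
    · obtain ⟨dl⟩ := E.DL mu
      exact ⟨(((subquotOfSurj φ hφ W).trans
        (LinearEquiv.ofInjective ψ hψ).symm).trans
        (Dequiv E hsqfin hLfin q).symm).trans dl⟩
  obtain ⟨einv⟩ := E.Dinvol X hX
  exact isCompFactor_congr einv key

end QHA

namespace QHA
open QHPaper
set_option linter.unusedSectionVars false
set_option maxHeartbeats 1000000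

variable {k S : Type} [Field k] [Ring S] [Algebra k S] [FiniteDimensional k S]
variable {Λ : Type} [Fintype Λ] [PartialOrder Λ] {Q : QHData S Λ} (E : Duality S Q)

theorem fin_P (lam : Λ) : Module.Finite S ↥(Q.P lam) := by
  obtain ⟨hproj, π, hsurj, hsup⟩ := Q.projCover lam
  haveI : IsSimpleModule S ↥(Q.L lam) := Q.simpleL lam
  haveI : Nontrivial ↥(Q.L lam) := IsSimpleModule.nontrivial S ↥(Q.L lam)
  obtain ⟨y, hy⟩ := exists_ne (0 : ↥(Q.L lam))
  obtain ⟨x, hx⟩ := hsurj y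
  have hspan : Submodule.span S {y} = ⊤ := by
    rcases eq_bot_or_eq_top (Submodule.span S {y}) with h | h
    · exact absurd (h ▸ Submodule.mem_span_singleton_self y) (by simpa using hy)
    · exact h
  have hsupN : Submodule.span S {x} ⊔ LinearMap.ker π = ⊤ := by
    rw [eq_top_iff]
    intro p _
    have : π p ∈ Submodule.span S {y} := hspan ▸ Submodule.mem_top
    obtain ⟨s, hs⟩ := Submodule.mem_span_singleton.mp this
    refine Submodule.mem_sup.mpr ⟨s • x, Submodule.smul_mem _ s (Submodule.mem_span_singleton_self x),
      p - s • x, ?_, by abel⟩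
    rw [LinearMap.mem_ker, map_sub, map_smul, hx, hs, sub_self]
  have hN := hsup _ hsupN
  rw [Module.finite_def, ← hN]
  exact Submodule.fg_span_singleton x

include k in
theorem D_inj_of_proj (Pm : ModuleCat.{0} S) (hfin : Module.Finite S ↥Pm)
    (hproj : Module.Projective S ↥Pm) : Module.Injective S ↥(E.D Pm) := by
  haveI := hproj
  apply Module.Baer.injective
  intro I g
  have hS : Module.Finite S ↥(ModuleCat.of S S) := Module.Finite.self S
  have hI : Module.Finite S ↥(ModuleCat.of S ↥I) := QHA.fin_submodule k hS I
  have hDP : Module.Finite S ↥(E.D Pm) := E.finD Pm hfin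
  set j : ↥(ModuleCat.of S ↥I) →ₗ[S] ↥(ModuleCat.of S S) := I.subtype with hj
  have hjsurj : Function.Surjective (E.Dmap j) :=
    Dmap_surjective E hI hS j (Submodule.injective_subtype I)
  haveI : Module.Projective S ↥(E.D (E.D Pm)) :=
    Module.Projective.of_equiv (Classical.choice (E.Dinvol Pm hfin)).symm
  obtain ⟨t, ht⟩ := Module.projective_lifting_property (E.Dmap j)
    (E.Dmap (A := ModuleCat.of S ↥I) (B := E.D Pm) g) hjsurj
  obtain ⟨u, hu⟩ := (E.Dfull hS hDP).2 t
  refine ⟨u, fun x hx => ?_⟩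
  have hcomp : u ∘ₗ j = g := by
    apply (E.Dfull hI hDP).1
    show E.Dmap (u ∘ₗ j) = E.Dmap g
    rw [E.Dcomp hI hS hDP j u]
    rw [show E.Dmap u = t from hu, ht]
  exact congrArg (fun (f : ↥(ModuleCat.of S ↥I) →ₗ[S] ↥(E.D Pm)) => f ⟨x, hx⟩) hcomp

include k in
theorem isInjHull_D_P (lam : Λ) : IsInjHull S (E.D (Q.P lam)) (Q.L lam) := by
  obtain ⟨hproj, π, hπsurj, hsup⟩ := Q.projCover lam
  have hPfin : Module.Finite S ↥(Q.P lam) := fin_P lam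
  have hLfin : Module.Finite S ↥(Q.L lam) := Q.finiteL lam
  have hDP : Module.Finite S ↥(E.D (Q.P lam)) := E.finD _ hPfin
  have hDL : Module.Finite S ↥(E.D (Q.L lam)) := E.finD _ hLfin
  have hπinj : Function.Injective (E.Dmap π) :=
    Dmap_injective (k := k) E hPfin hLfin π hπsurj
  obtain ⟨eL⟩ := E.DL lam
  refine ⟨D_inj_of_proj (k := k) E _ hPfin hproj,
    E.Dmap π ∘ₗ (eL.symm : ↥(Q.L lam) →ₗ[S] ↥(E.D (Q.L lam))), ?_, ?_⟩
  · exact hπinj.comp eL.symm.injective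
  · intro N hN
    have hrange : LinearMap.range (E.Dmap π ∘ₗ (eL.symm : ↥(Q.L lam) →ₗ[S] ↥(E.D (Q.L lam))))
        = LinearMap.range (E.Dmap π) := by
      rw [LinearMap.range_comp, LinearEquiv.range, Submodule.map_top]
    rw [hrange] at hN
    -- setup
    set Qt : ModuleCat.{0} S := ModuleCat.of S (↥(E.D (Q.P lam)) ⧸ N) with hQt
    have hQtfin : Module.Finite S ↥Qt := QHA.fin_quot hDP N
    set q : ↥(E.D (Q.P lam)) →ₗ[S] ↥Qt := N.mkQ with hq
    set c : ↥(E.D (Q.L lam)) →ₗ[S] ↥Qt := q ∘ₗ E.Dmap π with hc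
    have hcinj : Function.Injective c := by
      rw [← LinearMap.ker_eq_bot]
      rw [eq_bot_iff]
      intro x hx
      have h1 : E.Dmap π x ∈ N := by
        have hx0 : c x = 0 := LinearMap.mem_ker.mp hx
        rw [hc, LinearMap.comp_apply, hq] at hx0
        exact (Submodule.Quotient.mk_eq_zero N).mp hx0
      have h2 : E.Dmap π x ∈ N ⊓ LinearMap.range (E.Dmap π) :=
        ⟨h1, LinearMap.mem_range_self _ x⟩
      rw [hN] at h2
      have : E.Dmap π x = 0 := h2
      simp [LinearMap.mem_ker, hπinj (by rw [this, map_zero] : E.Dmap π x = E.Dmap π 0)]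
    have hDcsurj : Function.Surjective (E.Dmap c) :=
      Dmap_surjective E hDL hQtfin c hcinj
    have hDcomp : E.Dmap c = E.Dmap (E.Dmap π) ∘ₗ E.Dmap q :=
      E.Dcomp hDL hDP hQtfin (E.Dmap π) q
    set α := Classical.choice (E.Dinvol (Q.P lam) hPfin)
    set m : ↥(Q.P lam) →ₗ[S] ↥(E.D (E.D (Q.L lam))) :=
      E.Dmap (E.Dmap π) ∘ₗ (α.symm : ↥(Q.P lam) →ₗ[S] ↥(E.D (E.D (Q.P lam)))) with hm
    have hDDπsurj : Function.Surjective (E.Dmap (E.Dmap π)) :=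
      Dmap_surjective E hDL hDP (E.Dmap π) hπinj
    have hmsurj : Function.Surjective m := hDDπsurj.comp α.symm.surjective
    -- ker m is proper
    haveI : IsSimpleModule S ↥(Q.L lam) := Q.simpleL lam
    haveI : Nontrivial ↥(Q.L lam) := IsSimpleModule.nontrivial S ↥(Q.L lam)
    have hnontriv : Nontrivial ↥(E.D (E.D (Q.L lam))) :=
      (Classical.choice (E.Dinvol (Q.L lam) hLfin)).toEquiv.nontrivial
    have hkerm : LinearMap.ker m ≠ ⊤ := by
      intro h
      obtain ⟨z, hz⟩ := exists_ne (0 : ↥(E.D (E.D (Q.L lam))))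
      obtain ⟨x, hx⟩ := hmsurj z
      have : m x = 0 := LinearMap.mem_ker.mp (h ▸ Submodule.mem_top)
      exact hz (by rw [← hx, this])
    -- the kernel of π is the largest proper submodule of P
    have hmax : ∀ U : Submodule S ↥(Q.P lam), U ≠ ⊤ → U ≤ LinearMap.ker π := by
      intro U hU
      rcases eq_bot_or_eq_top (Submodule.map π (U ⊔ LinearMap.ker π)) with h | h
      · intro x hxU
        have : π x ∈ Submodule.map π (U ⊔ LinearMap.ker π) :=
          ⟨x, Submodule.mem_sup_left hxU, rfl⟩
        rw [h] at this
        exact LinearMap.mem_ker.mpr this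
      · exfalso
        apply hU
        apply hsup
        rw [eq_top_iff]
        intro p _
        have : π p ∈ Submodule.map π (U ⊔ LinearMap.ker π) := h ▸ Submodule.mem_top
        obtain ⟨w, hw, hwp⟩ := this
        have hsub : p - w ∈ LinearMap.ker π := by
          rw [LinearMap.mem_ker, map_sub, hwp, sub_self]
        have : p = w + (p - w) := by abel
        rw [this]
        exact Submodule.add_mem _ hw (Submodule.mem_sup_right hsub)
    have hkerm_le : LinearMap.ker m ≤ LinearMap.ker π := hmax _ hkerm
    set U' : Submodule S ↥(Q.P lam) :=
      Submodule.map (α : ↥(E.D (E.D (Q.P lam))) →ₗ[S] ↥(Q.P lam))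
        (LinearMap.range (E.Dmap q)) with hU'
    have hU'surj : ∀ y, ∃ x ∈ U', m x = y := by
      intro y
      obtain ⟨z, hz⟩ := hDcsurj y
      refine ⟨α (E.Dmap q z), ⟨E.Dmap q z, LinearMap.mem_range_self _ z, rfl⟩, ?_⟩
      have : m (α (E.Dmap q z)) = E.Dmap (E.Dmap π) (E.Dmap q z) := by
        simp [hm]
      rw [this, ← LinearMap.comp_apply, ← hDcomp, hz]
    have hU'sup : U' ⊔ LinearMap.ker m = ⊤ := by
      rw [eq_top_iff]
      intro p _
      obtain ⟨x, hxU, hx⟩ := hU'surj (m p)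
      have hker : p - x ∈ LinearMap.ker m := by
        rw [LinearMap.mem_ker, map_sub, hx, sub_self]
      have : p = x + (p - x) := by abel
      rw [this]
      exact Submodule.add_mem _ (Submodule.mem_sup_left hxU) (Submodule.mem_sup_right hker)
    have hU'top : U' = ⊤ := by
      apply hsup
      rw [eq_top_iff, ← hU'sup]
      exact sup_le_sup_left hkerm_le _
    have hrangeq : LinearMap.range (E.Dmap q) = ⊤ := by
      rw [eq_top_iff]
      intro z _
      have : α z ∈ U' := hU'top ▸ Submodule.mem_top
      obtain ⟨r, hr, hrz⟩ := this
      have : r = z := α.injective hrz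
      exact this ▸ hr
    -- conclude N = ⊥
    have hNfin : Module.Finite S ↥(ModuleCat.of S ↥N) := QHA.fin_submodule k hDP N
    obtain ⟨h1, h2, h3⟩ := E.Dexact hNfin hDP hQtfin
      (N.subtype : ↥(ModuleCat.of S ↥N) →ₗ[S] ↥(E.D (Q.P lam))) q
      (Submodule.injective_subtype N) (Submodule.mkQ_surjective N)
      (by rw [Submodule.range_subtype, hq, Submodule.ker_mkQ])
    rw [hrangeq] at h3
    have hzero : ∀ y : ↥(E.D (ModuleCat.of S ↥N)), y = 0 := by
      intro y
      obtain ⟨x, hx⟩ := h2 y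
      have : x ∈ LinearMap.ker (E.Dmap (A := ModuleCat.of S ↥N)
          (B := E.D (Q.P lam)) N.subtype) := h3.symm ▸ Submodule.mem_top
      rw [← hx, LinearMap.mem_ker.mp this]
    have hsub : Subsingleton ↥(ModuleCat.of S ↥N) :=
      subsingleton_of_D E hNfin ⟨fun a b => by rw [hzero a, hzero b]⟩
    rw [eq_bot_iff]
    intro x hx
    have : (⟨x, hx⟩ : ↥N) = (0 : ↥N) := hsub.elim _ _
    simpa using congrArg Subtype.val this

theorem injHull_unique {I₁ I₂ L : ModuleCat.{0} S} (h₁ : IsInjHull S I₁ L)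
    (h₂ : IsInjHull S I₂ L) : Nonempty (↥I₁ ≃ₗ[S] ↥I₂) := by
  obtain ⟨hinj₁, ι₁, hι₁, hess₁⟩ := h₁
  obtain ⟨hinj₂, ι₂, hι₂, hess₂⟩ := h₂
  obtain ⟨h, hh⟩ := hinj₂.out ι₁ hι₁ ι₂
  have hhinj : Function.Injective h := by
    rw [← LinearMap.ker_eq_bot]
    apply hess₁
    rw [eq_bot_iff]
    rintro x ⟨hxk, y, rfl⟩
    have : ι₂ y = 0 := by rw [← hh y]; exact LinearMap.mem_ker.mp hxk
    have : y = 0 := hι₂ (by rw [this, map_zero])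
    rw [this, map_zero]
    exact Submodule.zero_mem ⊥
  obtain ⟨r, hr⟩ := hinj₁.out h hhinj LinearMap.id
  have hrinj : Function.Injective r := by
    rw [← LinearMap.ker_eq_bot]
    apply hess₂
    rw [eq_bot_iff]
    rintro x ⟨hxk, y, rfl⟩
    have h1 : ι₂ y = h (ι₁ y) := (hh y).symm
    have h2 : r (ι₂ y) = ι₁ y := by rw [h1, hr (ι₁ y)]; rfl
    have h3 : ι₁ y = 0 := by rw [← h2]; exact LinearMap.mem_ker.mp hxk
    have : y = 0 := hι₁ (by rw [h3, map_zero])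
    rw [this, map_zero]
    exact Submodule.zero_mem ⊥
  have hrsurj : Function.Surjective r := fun z => ⟨h z, by rw [hr z]; rfl⟩
  exact ⟨(LinearEquiv.ofBijective r ⟨hrinj, hrsurj⟩).symm⟩

end QHA

namespace QHA
open QHPaper
set_option linter.unusedSectionVars false
set_option maxHeartbeats 1000000

variable {k S : Type} [Field k] [Ring S] [Algebra k S] [FiniteDimensional k S]
variable {Λ : Type} [Fintype Λ] [PartialOrder Λ] {Q : QHData S Λ} (E : Duality S Q)

include k in
theorem D_std_equiv_costd (lam : Λ) :
    Nonempty (↥(E.D (Q.std lam)) ≃ₗ[S] ↥(Q.costd lam)) := by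
  obtain ⟨K, ⟨estd⟩, hstdfac, hstdmin⟩ := Q.stdSpec lam
  obtain ⟨V, ⟨ecostd⟩, hcofac, hcomax⟩ := Q.costdSpec lam
  have hPfin : Module.Finite S ↥(Q.P lam) := fin_P lam
  have hDP : Module.Finite S ↥(E.D (Q.P lam)) := E.finD _ hPfin
  have hPK : Module.Finite S ↥(ModuleCat.of S (↥(Q.P lam) ⧸ K)) := QHA.fin_quot hPfin K
  have hstdfin : Module.Finite S ↥(Q.std lam) := by
    haveI := hPK
    exact Module.Finite.equiv (estd.symm : (↥(Q.P lam) ⧸ K) ≃ₗ[S] ↥(Q.std lam))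
  have hDstd : Module.Finite S ↥(E.D (Q.std lam)) := E.finD _ hstdfin
  -- identify I lam with D(P lam)
  have θ : ↥(Q.I lam) ≃ₗ[S] ↥(E.D (Q.P lam)) :=
    Classical.choice (injHull_unique (Q.injHull lam) (isInjHull_D_P (k := k) E lam))
  have hIfin : Module.Finite S ↥(Q.I lam) := by
    haveI := hDP
    exact Module.Finite.equiv θ.symm
  -- embed D(std) into D(P)
  have eDstd : ↥(E.D (ModuleCat.of S (↥(Q.P lam) ⧸ K))) ≃ₗ[S] ↥(E.D (Q.std lam)) :=
    Dequiv E (A := Q.std lam) (B := ModuleCat.of S (↥(Q.P lam) ⧸ K)) hstdfin hPK estd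
  set em : ↥(E.D (Q.std lam)) →ₗ[S] ↥(E.D (Q.P lam)) :=
    (E.Dmap (A := Q.P lam) (B := ModuleCat.of S (↥(Q.P lam) ⧸ K)) K.mkQ) ∘ₗ
      (eDstd.symm : ↥(E.D (Q.std lam)) →ₗ[S] ↥(E.D (ModuleCat.of S (↥(Q.P lam) ⧸ K))))
    with hem
  have hinjem : Function.Injective em := by
    rw [hem, LinearMap.coe_comp]
    exact (Dmap_injective (k := k) E hPfin hPK K.mkQ (Submodule.mkQ_surjective K)).comp
      eDstd.symm.injective
  set V₁ : Submodule S ↥(Q.I lam) :=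
    Submodule.map (θ.symm : ↥(E.D (Q.P lam)) →ₗ[S] ↥(Q.I lam)) (LinearMap.range em) with hV₁
  have eV₁ : ↥(E.D (Q.std lam)) ≃ₗ[S] ↥V₁ :=
    (LinearEquiv.ofInjective em hinjem).trans (θ.symm.submoduleMap (LinearMap.range em))
  -- composition factors of V₁ are ≤ lam
  have hV₁fac : ∀ mu, IsCompFactor S (Q.L mu) (ModuleCat.of S ↥V₁) → mu ≤ lam := by
    intro mu h
    have h2 : IsCompFactor S (Q.L mu) (E.D (Q.std lam)) :=
      isCompFactor_congr (X := ModuleCat.of S ↥V₁) (Y := E.D (Q.std lam)) eV₁.symm h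
    have h3 : IsCompFactor S (Q.L mu) (Q.std lam) :=
      isCompFactor_of_D (k := k) E hstdfin mu h2
    exact hstdfac mu (isCompFactor_congr (Y := ModuleCat.of S (↥(Q.P lam) ⧸ K)) estd h3)
  have hV₁le : V₁ ≤ V := hcomax V₁ hV₁fac
  -- the reverse: V embeds into D(std)
  have hVfin : Module.Finite S ↥V := QHA.fin_submodule k hIfin V
  set V₂ : Submodule S ↥(E.D (Q.P lam)) :=
    Submodule.map (θ : ↥(Q.I lam) →ₗ[S] ↥(E.D (Q.P lam))) V with hV₂
  have eV₂ : ↥V ≃ₗ[S] ↥V₂ := θ.submoduleMap V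
  have hV₂fin : Module.Finite S ↥(ModuleCat.of S ↥V₂) := QHA.fin_submodule k hDP V₂
  have hDV₂fin : Module.Finite S ↥(E.D (ModuleCat.of S ↥V₂)) := E.finD _ hV₂fin
  set α := Classical.choice (E.Dinvol (Q.P lam) hPfin)
  set m₂ : ↥(Q.P lam) →ₗ[S] ↥(E.D (ModuleCat.of S ↥V₂)) :=
    (E.Dmap (A := ModuleCat.of S ↥V₂) (B := E.D (Q.P lam)) V₂.subtype) ∘ₗ
      (α.symm : ↥(Q.P lam) →ₗ[S] ↥(E.D (E.D (Q.P lam)))) with hm₂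
  have hm₂surj : Function.Surjective m₂ := by
    rw [hm₂, LinearMap.coe_comp]
    exact (Dmap_surjective E hV₂fin hDP V₂.subtype (Submodule.injective_subtype V₂)).comp
      α.symm.surjective
  set K₂ := LinearMap.ker m₂ with hK₂
  have eK₂ : (↥(Q.P lam) ⧸ K₂) ≃ₗ[S] ↥(E.D (ModuleCat.of S ↥V₂)) :=
    m₂.quotKerEquivOfSurjective hm₂surj
  have hK₂fac : ∀ mu, IsCompFactor S (Q.L mu) (ModuleCat.of S (↥(Q.P lam) ⧸ K₂)) → mu ≤ lam := by
    intro mu h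
    have h2 : IsCompFactor S (Q.L mu) (E.D (ModuleCat.of S ↥V₂)) :=
      isCompFactor_congr (X := ModuleCat.of S (↥(Q.P lam) ⧸ K₂)) eK₂ h
    have h3 : IsCompFactor S (Q.L mu) (ModuleCat.of S ↥V₂) :=
      isCompFactor_of_D (k := k) E hV₂fin mu h2
    have h4 : IsCompFactor S (Q.L mu) (ModuleCat.of S ↥V) :=
      isCompFactor_congr (X := ModuleCat.of S ↥V₂) (Y := ModuleCat.of S ↥V) eV₂.symm h3
    exact hcofac mu h4
  have hKle : K ≤ K₂ := hstdmin K₂ hK₂fac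
  -- surjection std → D(V₂)
  have hmapQsurj : Function.Surjective (Submodule.mapQ K K₂ LinearMap.id (by simpa using hKle)) := by
    intro y
    obtain ⟨x, rfl⟩ := Submodule.mkQ_surjective K₂ y
    exact ⟨K.mkQ x, by simp [Submodule.mapQ_apply]⟩
  set s : ↥(Q.std lam) →ₗ[S] ↥(E.D (ModuleCat.of S ↥V₂)) :=
    (eK₂ : (↥(Q.P lam) ⧸ K₂) →ₗ[S] ↥(E.D (ModuleCat.of S ↥V₂))) ∘ₗ
      (Submodule.mapQ K K₂ LinearMap.id (by simpa using hKle)) ∘ₗ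
      (estd : ↥(Q.std lam) →ₗ[S] (↥(Q.P lam) ⧸ K)) with hs
  have hssurj : Function.Surjective s := by
    rw [hs, LinearMap.coe_comp, LinearMap.coe_comp]
    exact (eK₂.surjective.comp hmapQsurj).comp estd.surjective
  have hDsinj : Function.Injective (E.Dmap (A := Q.std lam) (B := E.D (ModuleCat.of S ↥V₂)) s) :=
    Dmap_injective (k := k) E hstdfin hDV₂fin s hssurj
  set β := Classical.choice (E.Dinvol (ModuleCat.of S ↥V₂) hV₂fin)
  set χ : ↥V →ₗ[S] ↥V₁ :=
    (eV₁ : ↥(E.D (Q.std lam)) →ₗ[S] ↥V₁) ∘ₗ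
      (E.Dmap (A := Q.std lam) (B := E.D (ModuleCat.of S ↥V₂)) s) ∘ₗ
      (β.symm : ↥(ModuleCat.of S ↥V₂) →ₗ[S] ↥(E.D (E.D (ModuleCat.of S ↥V₂)))) ∘ₗ
      (eV₂ : ↥V →ₗ[S] ↥V₂) with hχ
  have hχinj : Function.Injective χ := by
    rw [hχ, LinearMap.coe_comp, LinearMap.coe_comp, LinearMap.coe_comp]
    exact ((eV₁.injective.comp hDsinj).comp β.symm.injective).comp eV₂.injective
  set ψ : ↥V →ₗ[S] ↥V := (Submodule.inclusion hV₁le) ∘ₗ χ with hψ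
  have hψinj : Function.Injective ψ := by
    rw [hψ, LinearMap.coe_comp]
    exact (Submodule.inclusion_injective hV₁le).comp hχinj
  haveI : IsArtinian S ↥V := (QHA.tower_finite k ↥V hVfin).2
  have hψsurj := IsArtinian.surjective_of_injective_endomorphism ψ hψinj
  have hVle : V ≤ V₁ := by
    intro x hx
    obtain ⟨w, hw⟩ := hψsurj ⟨x, hx⟩
    have : (ψ w : ↥(Q.I lam)) ∈ V₁ := (χ w).2
    rw [hw] at this
    exact this
  have hVeq : V₁ = V := le_antisymm hV₁le hVle
  exact ⟨(eV₁.trans (LinearEquiv.ofEq V₁ V hVeq)).trans ecostd.symm⟩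

include k E in
theorem fin_costd (lam : Λ) : Module.Finite S ↥(Q.costd lam) := by
  obtain ⟨e⟩ := D_std_equiv_costd (k := k) E lam
  have hstdfin : Module.Finite S ↥(Q.std lam) := by
    obtain ⟨K, ⟨estd⟩, _, _⟩ := Q.stdSpec lam
    haveI : Module.Finite S (↥(Q.P lam) ⧸ K) := QHA.fin_quot (fin_P lam) K
    exact Module.Finite.equiv (estd.symm : (↥(Q.P lam) ⧸ K) ≃ₗ[S] ↥(Q.std lam))
  haveI := E.finD _ hstdfin
  exact Module.Finite.equiv e

include k in
theorem fin_std (lam : Λ) : Module.Finite S ↥(Q.std lam) := by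
  obtain ⟨K, ⟨estd⟩, _, _⟩ := Q.stdSpec lam
  haveI : Module.Finite S (↥(Q.P lam) ⧸ K) := QHA.fin_quot (fin_P lam) K
  exact Module.Finite.equiv (estd.symm : (↥(Q.P lam) ⧸ K) ≃ₗ[S] ↥(Q.std lam))

include k in
theorem D_costd_equiv_std (lam : Λ) :
    Nonempty (↥(E.D (Q.costd lam)) ≃ₗ[S] ↥(Q.std lam)) := by
  obtain ⟨e⟩ := D_std_equiv_costd (k := k) E lam
  have hstdfin : Module.Finite S ↥(Q.std lam) := fin_std (k := k) lam
  have hDstd : Module.Finite S ↥(E.D (Q.std lam)) := E.finD _ hstdfin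
  have hcfin : Module.Finite S ↥(Q.costd lam) := fin_costd (k := k) E lam
  exact ⟨(Dequiv E (A := E.D (Q.std lam)) (B := Q.costd lam) hDstd hcfin e).trans
    (Classical.choice (E.Dinvol (Q.std lam) hstdfin))⟩

end QHA

namespace QHA
open QHPaper
set_option linter.unusedSectionVars false
set_option maxHeartbeats 1000000

variable {k S : Type} [Field k] [Ring S] [Algebra k S] [FiniteDimensional k S]
variable {Λ : Type} [Fintype Λ] [PartialOrder Λ] {Q : QHData S Λ} (E : Duality S Q)

theorem subsingleton_bot (M : ModuleCat.{0} S) : Subsingleton ↥(⊥ : Submodule S ↥M) :=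
  ⟨fun a b => Subtype.ext (((Submodule.mem_bot S).mp a.2).trans
    ((Submodule.mem_bot S).mp b.2).symm)⟩

include k in
theorem fin_of_filtration {M : ModuleCat.{0} S} {n : ℕ} {f : Fin (n + 1) → Submodule S ↥M}
    {C : Fin n → ModuleCat.{0} S} (h : HasFiltrationWithSections S M n f C)
    (hC : ∀ i, Module.Finite S ↥(C i)) : Module.Finite S ↥M := by
  obtain ⟨hmono, h0, hlast, hsec⟩ := h
  have key : ∀ i : Fin (n + 1), Module.Finite S ↥(f i) := by
    intro i
    induction i using Fin.induction with
    | zero =>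
      rw [h0]
      exact QHA.fin_subsingleton (subsingleton_bot M)
    | succ i ih =>
      obtain ⟨e⟩ := hsec i
      set A' := Submodule.comap (f i.succ).subtype (f i.castSucc) with hA'
      have h1 : Module.Finite S ↥A' := by
        haveI := ih
        exact Module.Finite.equiv (Submodule.comapSubtypeEquivOfLe
          (hmono (Fin.castSucc_le_succ i))).symm
      have h2 : Module.Finite S (↥(f i.succ) ⧸ A') := by
        haveI := hC i
        exact Module.Finite.equiv (e.symm : ↥(C i) ≃ₗ[S] subquot S (f i.castSucc) (f i.succ))
      exact QHA.fin_ext A' h1 h2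
  have := key (Fin.last n)
  rw [hlast] at this
  haveI := this
  exact Module.Finite.equiv (Submodule.topEquiv : ↥(⊤ : Submodule S ↥M) ≃ₗ[S] ↥M)

/-- The "dual" submodule of `U ≤ M` inside `D M`: the kernel of `D M → D U`. -/
noncomputable def dualSub (M : ModuleCat.{0} S) (U : Submodule S ↥M) :
    Submodule S ↥(E.D M) :=
  LinearMap.ker (E.Dmap (A := ModuleCat.of S ↥U) (B := M) U.subtype)

include k in
theorem dualSub_antitone {M : ModuleCat.{0} S} (hM : Module.Finite S ↥M)
    {A B : Submodule S ↥M} (hAB : A ≤ B) : dualSub E M B ≤ dualSub E M A := by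
  have hA : Module.Finite S ↥(ModuleCat.of S ↥A) := QHA.fin_submodule k hM A
  have hB : Module.Finite S ↥(ModuleCat.of S ↥B) := QHA.fin_submodule k hM B
  have hfac : E.Dmap (A := ModuleCat.of S ↥A) (B := M) A.subtype
      = (E.Dmap (A := ModuleCat.of S ↥A) (B := ModuleCat.of S ↥B) (Submodule.inclusion hAB)) ∘ₗ
        (E.Dmap (A := ModuleCat.of S ↥B) (B := M) B.subtype) := by
    rw [← E.Dcomp hA hB hM (Submodule.inclusion hAB) B.subtype]
    rw [Submodule.subtype_comp_inclusion]
  intro x hx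
  have hx0 : E.Dmap (A := ModuleCat.of S ↥B) (B := M) B.subtype x = 0 := hx
  show E.Dmap (A := ModuleCat.of S ↥A) (B := M) A.subtype x = 0
  rw [hfac, LinearMap.comp_apply, hx0, map_zero]

include k in
theorem dualSub_bot {M : ModuleCat.{0} S} (hM : Module.Finite S ↥M) :
    dualSub E M (⊥ : Submodule S ↥M) = ⊤ := by
  have hz : ((⊥ : Submodule S ↥M).subtype : ↥(⊥ : Submodule S ↥M) →ₗ[S] ↥M) = 0 := by
    ext x
    exact (Submodule.mem_bot S).mp x.2
  unfold dualSub
  rw [hz, Dmap_zero E (QHA.fin_subsingleton (subsingleton_bot M)) hM, LinearMap.ker_zero]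

include k in
theorem dualSub_top {M : ModuleCat.{0} S} (hM : Module.Finite S ↥M) :
    dualSub E M (⊤ : Submodule S ↥M) = ⊥ := by
  have hsurj : Function.Surjective ((⊤ : Submodule S ↥M).subtype) :=
    fun x => ⟨⟨x, trivial⟩, rfl⟩
  unfold dualSub
  rw [LinearMap.ker_eq_bot]
  exact Dmap_injective (k := k) E (QHA.fin_submodule k hM ⊤) hM _ hsurj

include k in
theorem dualSub_section {M : ModuleCat.{0} S} (hM : Module.Finite S ↥M)
    {A B : Submodule S ↥M} (hAB : A ≤ B) :
    Nonempty ((subquot S (dualSub E M B) (dualSub E M A)) ≃ₗ[S]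
      ↥(E.D (ModuleCat.of S (subquot S A B)))) := by
  have hA : Module.Finite S ↥(ModuleCat.of S ↥A) := QHA.fin_submodule k hM A
  have hB : Module.Finite S ↥(ModuleCat.of S ↥B) := QHA.fin_submodule k hM B
  have hsq : Module.Finite S ↥(ModuleCat.of S (subquot S A B)) := QHA.fin_quot hB _
  set φ := E.Dmap (A := ModuleCat.of S ↥B) (B := M) B.subtype with hφdef
  have hφ : Function.Surjective φ :=
    Dmap_surjective E hB hM B.subtype (Submodule.injective_subtype B)
  set mkq : ↥(ModuleCat.of S ↥B) →ₗ[S] ↥(ModuleCat.of S (subquot S A B)) :=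
    (Submodule.comap B.subtype A).mkQ with hmkq
  obtain ⟨hinj, hsurj, hng⟩ := E.Dexact hA hB hsq
    (Submodule.inclusion hAB : ↥(ModuleCat.of S ↥A) →ₗ[S] ↥(ModuleCat.of S ↥B)) mkq
    (Submodule.inclusion_injective hAB) (Submodule.mkQ_surjective _)
    (by rw [Submodule.range_inclusion, hmkq, Submodule.ker_mkQ])
  have keyA : dualSub E M A = Submodule.comap φ (LinearMap.range (E.Dmap mkq)) := by
    have hfac : E.Dmap (A := ModuleCat.of S ↥A) (B := M) A.subtype
        = (E.Dmap (A := ModuleCat.of S ↥A) (B := ModuleCat.of S ↥B)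
            (Submodule.inclusion hAB)) ∘ₗ φ := by
      rw [hφdef, ← E.Dcomp hA hB hM (Submodule.inclusion hAB) B.subtype]
      rw [Submodule.subtype_comp_inclusion]
    unfold dualSub
    rw [hfac, LinearMap.ker_comp, hng]
  have keyB : dualSub E M B = LinearMap.ker φ := rfl
  rw [keyA, keyB]
  exact ⟨(subquotOfSurj φ hφ (LinearMap.range (E.Dmap mkq))).trans
    (LinearEquiv.ofInjective (E.Dmap mkq) hinj).symm⟩

include k in
theorem dual_filtration {M : ModuleCat.{0} S} {n : ℕ} {f : Fin (n + 1) → Submodule S ↥M}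
    {C : Fin n → ModuleCat.{0} S} (hM : Module.Finite S ↥M)
    (h : HasFiltrationWithSections S M n f C) (hC : ∀ i, Module.Finite S ↥(C i))
    (C' : Fin n → ModuleCat.{0} S)
    (hC' : ∀ i : Fin n, Nonempty (↥(E.D (C i)) ≃ₗ[S] ↥(C' i))) :
    ∃ f' : Fin (n + 1) → Submodule S ↥(E.D M),
      HasFiltrationWithSections S (E.D M) n f' (fun j => C' j.rev) := by
  obtain ⟨hmono, h0, hlast, hsec⟩ := h
  refine ⟨fun j => dualSub E M (f j.rev), ?_, ?_, ?_, ?_⟩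
  · intro a b hab
    exact dualSub_antitone (k := k) E hM (hmono (Fin.rev_le_rev.mpr hab))
  · have h1 : (0 : Fin (n + 1)).rev = Fin.last n := by
      ext
      simp only [Fin.val_rev, Fin.val_zero, Fin.val_last]
      omega
    show dualSub E M (f (0 : Fin (n + 1)).rev) = ⊥
    rw [h1, hlast, dualSub_top (k := k) E hM]
  · have h1 : (Fin.last n).rev = 0 := by
      ext
      simp only [Fin.val_rev, Fin.val_zero, Fin.val_last]
      omega
    show dualSub E M (f (Fin.last n).rev) = ⊤
    rw [h1, h0, dualSub_bot (k := k) E hM]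
  · intro j
    have e1 : j.castSucc.rev = j.rev.succ := by
      ext
      simp only [Fin.val_rev, Fin.coe_castSucc, Fin.val_succ]
      omega
    have e2 : j.succ.rev = j.rev.castSucc := by
      ext
      simp only [Fin.val_rev, Fin.coe_castSucc, Fin.val_succ]
      omega
    show Nonempty ((subquot S (dualSub E M (f j.castSucc.rev)) (dualSub E M (f j.succ.rev)))
      ≃ₗ[S] ↥(C' j.rev))
    rw [e1, e2]
    have hAB : f j.rev.castSucc ≤ f j.rev.succ := hmono (Fin.castSucc_le_succ j.rev)
    obtain ⟨esec⟩ := hsec j.rev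
    have hsqfin : Module.Finite S ↥(ModuleCat.of S (subquot S (f j.rev.castSucc) (f j.rev.succ))) :=
      QHA.fin_quot (QHA.fin_submodule k hM _) _
    obtain ⟨edual⟩ := dualSub_section (k := k) E hM hAB
    exact ⟨(edual.trans (Dequiv E (A := ModuleCat.of S (subquot S (f j.rev.castSucc) (f j.rev.succ)))
      (B := C j.rev) hsqfin (hC j.rev) esec).symm).trans (Classical.choice (hC' j.rev))⟩

include k E in
theorem fin_of_incostd {M : ModuleCat.{0} S} (h : InCostdFilt S Q M) :
    Module.Finite S ↥M := by
  obtain ⟨n, f, g, hfil⟩ := h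
  exact fin_of_filtration (k := k) hfil (fun i => fin_costd (k := k) E (g i))

include k in
theorem fin_of_instd {M : ModuleCat.{0} S} (h : InStdFilt S Q M) :
    Module.Finite S ↥M := by
  obtain ⟨n, f, g, hfil⟩ := h
  exact fin_of_filtration (k := k) hfil (fun i => fin_std (k := k) (g i))

include k in
theorem instd_D_of_incostd {M : ModuleCat.{0} S} (h : InCostdFilt S Q M) :
    InStdFilt S Q (E.D M) := by
  have hM : Module.Finite S ↥M := fin_of_incostd (k := k) E h
  obtain ⟨n, f, g, hfil⟩ := h
  obtain ⟨f', hf'⟩ := dual_filtration (k := k) E hM hfil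
    (fun i => fin_costd (k := k) E (g i)) (fun i => Q.std (g i))
    (fun i => D_costd_equiv_std (k := k) E (g i))
  exact ⟨n, f', fun j => g j.rev, hf'⟩

include k in
theorem incostd_D_of_instd {M : ModuleCat.{0} S} (h : InStdFilt S Q M) :
    InCostdFilt S Q (E.D M) := by
  have hM : Module.Finite S ↥M := fin_of_instd (k := k) h
  obtain ⟨n, f, g, hfil⟩ := h
  obtain ⟨f', hf'⟩ := dual_filtration (k := k) E hM hfil
    (fun i => fin_std (k := k) (g i)) (fun i => Q.costd (g i))
    (fun i => D_std_equiv_costd (k := k) E (g i))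
  exact ⟨n, f', fun j => g j.rev, hf'⟩

end QHA

namespace QHA
open QHPaper
set_option linter.unusedSectionVars false
set_option maxHeartbeats 1000000

variable {k S : Type} [Field k] [Ring S] [Algebra k S] [FiniteDimensional k S]
variable {Λ : Type} [Fintype Λ] [PartialOrder Λ] {Q : QHData S Λ} (E : Duality S Q)

/-- Linear equivalence from an equality of `ModuleCat` objects. -/
noncomputable def eqEquiv {X Y : ModuleCat.{0} S} (h : X = Y) : ↥X ≃ₗ[S] ↥Y := by
  subst h; exact LinearEquiv.refl S ↥X

/-- Conjugation of a linear map by linear equivalences. -/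
noncomputable def conjMap {A B A' B' : ModuleCat.{0} S} (e1 : ↥A ≃ₗ[S] ↥A')
    (e2 : ↥B ≃ₗ[S] ↥B') (g : ↥A →ₗ[S] ↥B) : ↥A' →ₗ[S] ↥B' :=
  (e2 : ↥B →ₗ[S] ↥B') ∘ₗ g ∘ₗ (e1.symm : ↥A' →ₗ[S] ↥A)

theorem conjMap_apply {A B A' B' : ModuleCat.{0} S} (e1 : ↥A ≃ₗ[S] ↥A')
    (e2 : ↥B ≃ₗ[S] ↥B') (g : ↥A →ₗ[S] ↥B) (x : ↥A') :
    conjMap e1 e2 g x = e2 (g (e1.symm x)) := rfl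

theorem conjMap_inj {A B A' B' : ModuleCat.{0} S} (e1 : ↥A ≃ₗ[S] ↥A')
    (e2 : ↥B ≃ₗ[S] ↥B') (g : ↥A →ₗ[S] ↥B) :
    Function.Injective (conjMap e1 e2 g) ↔ Function.Injective g := by
  constructor
  · intro h x y hxy
    have : conjMap e1 e2 g (e1 x) = conjMap e1 e2 g (e1 y) := by
      rw [conjMap_apply, conjMap_apply, e1.symm_apply_apply, e1.symm_apply_apply, hxy]
    exact e1.injective (h this)
  · intro h x y hxy
    rw [conjMap_apply, conjMap_apply] at hxy
    exact e1.symm.injective (h (e2.injective hxy))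

theorem conjMap_surj {A B A' B' : ModuleCat.{0} S} (e1 : ↥A ≃ₗ[S] ↥A')
    (e2 : ↥B ≃ₗ[S] ↥B') (g : ↥A →ₗ[S] ↥B) :
    Function.Surjective (conjMap e1 e2 g) ↔ Function.Surjective g := by
  constructor
  · intro h y
    obtain ⟨x, hx⟩ := h (e2 y)
    exact ⟨e1.symm x, e2.injective (by rw [← conjMap_apply, hx])⟩
  · intro h y
    obtain ⟨x, hx⟩ := h (e2.symm y)
    exact ⟨e1 x, by rw [conjMap_apply, e1.symm_apply_apply, hx, e2.apply_symm_apply]⟩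

theorem conjMap_mem_range {A B A' B' : ModuleCat.{0} S} (e1 : ↥A ≃ₗ[S] ↥A')
    (e2 : ↥B ≃ₗ[S] ↥B') (g : ↥A →ₗ[S] ↥B) (y : ↥B') :
    y ∈ LinearMap.range (conjMap e1 e2 g) ↔ e2.symm y ∈ LinearMap.range g := by
  constructor
  · rintro ⟨x, rfl⟩
    rw [conjMap_apply, e2.symm_apply_apply]
    exact LinearMap.mem_range_self _ _
  · rintro ⟨x, hx⟩
    exact ⟨e1 x, by rw [conjMap_apply, e1.symm_apply_apply, hx, e2.apply_symm_apply]⟩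

theorem conjMap_mem_ker {A B A' B' : ModuleCat.{0} S} (e1 : ↥A ≃ₗ[S] ↥A')
    (e2 : ↥B ≃ₗ[S] ↥B') (g : ↥A →ₗ[S] ↥B) (y : ↥A') :
    y ∈ LinearMap.ker (conjMap e1 e2 g) ↔ e1.symm y ∈ LinearMap.ker g := by
  rw [LinearMap.mem_ker, LinearMap.mem_ker, conjMap_apply]
  constructor
  · intro h
    have := congrArg e2.symm h
    simpa using this
  · intro h
    rw [h, map_zero]

theorem conjMap_range_ker {A B C A' B' C' : ModuleCat.{0} S} (e1 : ↥A ≃ₗ[S] ↥A')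
    (e2 : ↥B ≃ₗ[S] ↥B') (e3 : ↥C ≃ₗ[S] ↥C') (g : ↥A →ₗ[S] ↥B) (h : ↥B →ₗ[S] ↥C)
    (hex : LinearMap.range g = LinearMap.ker h) :
    LinearMap.range (conjMap e1 e2 g) = LinearMap.ker (conjMap e2 e3 h) := by
  ext y
  rw [conjMap_mem_range, conjMap_mem_ker, hex]

/-- A short exact sequence `0 → A → B → C → 0`. -/
def ShortEx (A B C : ModuleCat.{0} S) : Prop :=
  ∃ (a : ↥A →ₗ[S] ↥B) (b : ↥B →ₗ[S] ↥C),
    Function.Injective a ∧ Function.Surjective b ∧ LinearMap.range a = LinearMap.ker b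

/-- Exactness of `0 → N 0 → ⋯ → N (d+1) → 0` for an `ℕ`-indexed chain. -/
def NExact (d : ℕ) (N : ℕ → ModuleCat.{0} S) (f : ∀ m : ℕ, ↥(N m) →ₗ[S] ↥(N (m+1))) : Prop :=
  Function.Injective (f 0) ∧ Function.Surjective (f d) ∧
    ∀ m, m < d → LinearMap.range (f m) = LinearMap.ker (f (m + 1))

def GfdLEN (Q : QHData S Λ) (M : ModuleCat.{0} S) (d : ℕ) : Prop :=
  ∃ (N : ℕ → ModuleCat.{0} S) (f : ∀ m, ↥(N m) →ₗ[S] ↥(N (m+1))),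
    NExact d N f ∧ N 0 = M ∧ ∀ m, 1 ≤ m → m ≤ d + 1 → InCostdFilt S Q (N m)

def WfdLEN (Q : QHData S Λ) (M : ModuleCat.{0} S) (d : ℕ) : Prop :=
  ∃ (N : ℕ → ModuleCat.{0} S) (f : ∀ m, ↥(N m) →ₗ[S] ↥(N (m+1))),
    NExact d N f ∧ N (d + 1) = M ∧ ∀ m, m ≤ d → InStdFilt S Q (N m)

/-- Extend a `Fin`-indexed chain of modules to an `ℕ`-indexed one. -/
noncomputable def extChain (d : ℕ) (N : Fin (d + 2) → ModuleCat.{0} S) : ℕ → ModuleCat.{0} S :=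
  fun m => if h : m < d + 2 then N ⟨m, h⟩ else N (Fin.last (d + 1))

theorem extChain_eq {d : ℕ} (N : Fin (d + 2) → ModuleCat.{0} S) (m : ℕ) (h : m < d + 2) :
    extChain d N m = N ⟨m, h⟩ := dif_pos h

theorem extChain_castSucc {d : ℕ} (N : Fin (d + 2) → ModuleCat.{0} S) (m : ℕ) (h : m < d + 1) :
    N ((⟨m, h⟩ : Fin (d + 1)).castSucc) = extChain d N m := by
  rw [extChain_eq N m (by omega)]
  congr 1

theorem extChain_succ {d : ℕ} (N : Fin (d + 2) → ModuleCat.{0} S) (m : ℕ) (h : m < d + 1) :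
    N ((⟨m, h⟩ : Fin (d + 1)).succ) = extChain d N (m + 1) := by
  rw [extChain_eq N (m + 1) (by omega)]
  congr 1

noncomputable def extMaps (d : ℕ) (N : Fin (d + 2) → ModuleCat.{0} S)
    (f : ∀ i : Fin (d + 1), ↥(N i.castSucc) →ₗ[S] ↥(N i.succ)) :
    ∀ m, ↥(extChain d N m) →ₗ[S] ↥(extChain d N (m + 1)) :=
  fun m => dite (m < d + 1)
    (fun h => conjMap (eqEquiv (extChain_castSucc N m h)) (eqEquiv (extChain_succ N m h))
      (f ⟨m, h⟩))
    (fun _ => 0)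

theorem extMaps_eq {d : ℕ} (N : Fin (d + 2) → ModuleCat.{0} S)
    (f : ∀ i : Fin (d + 1), ↥(N i.castSucc) →ₗ[S] ↥(N i.succ)) (m : ℕ) (h : m < d + 1) :
    extMaps d N f m = conjMap (eqEquiv (extChain_castSucc N m h))
      (eqEquiv (extChain_succ N m h)) (f ⟨m, h⟩) := dif_pos h

end QHA

namespace QHA
open QHPaper
set_option linter.unusedSectionVars false
set_option maxHeartbeats 1000000

variable {k S : Type} [Field k] [Ring S] [Algebra k S] [FiniteDimensional k S]
variable {Λ : Type} [Fintype Λ] [PartialOrder Λ] {Q : QHData S Λ}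

theorem nexact_of_isExactSeq {d : ℕ} {N : Fin (d + 2) → ModuleCat.{0} S}
    {f : ∀ i : Fin (d + 1), ↥(N i.castSucc) →ₗ[S] ↥(N i.succ)}
    (h : IsExactSeq S d N f) : NExact d (extChain d N) (extMaps d N f) := by
  obtain ⟨hinj, hsurj, hex⟩ := h
  refine ⟨?_, ?_, ?_⟩
  · rw [extMaps_eq N f 0 (by omega), conjMap_inj]
    rw [show (⟨0, by omega⟩ : Fin (d + 1)) = 0 from by ext; simp]
    exact hinj
  · rw [extMaps_eq N f d (by omega), conjMap_surj]
    rw [show (⟨d, by omega⟩ : Fin (d + 1)) = Fin.last d from by ext; simp]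
    exact hsurj
  · intro m hm
    rw [extMaps_eq N f m (by omega), extMaps_eq N f (m + 1) (by omega)]
    exact conjMap_range_ker _ _ _ _ _ (hex ⟨m, hm⟩)

theorem gfdN_of_gfd {M : ModuleCat.{0} S} {d : ℕ} (h : GfdLE S Q M d) : GfdLEN Q M d := by
  obtain ⟨N, f, hexact, hN0, hcos⟩ := h
  refine ⟨extChain d N, extMaps d N f, nexact_of_isExactSeq hexact, ?_, ?_⟩
  · rw [extChain_eq N 0 (by omega)]
    rw [show (⟨0, by omega⟩ : Fin (d + 2)) = 0 from by ext; simp]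
    exact hN0
  · intro m h1 hm
    rw [extChain_eq N m (by omega)]
    have : (⟨m, by omega⟩ : Fin (d + 2)) = (⟨m - 1, by omega⟩ : Fin (d + 1)).succ := by
      ext; simp; omega
    rw [this]
    exact hcos _

theorem wfdN_of_wfd {M : ModuleCat.{0} S} {d : ℕ} (h : WfdLE S Q M d) : WfdLEN Q M d := by
  obtain ⟨N, f, hexact, hlast, hstd⟩ := h
  refine ⟨extChain d N, extMaps d N f, nexact_of_isExactSeq hexact, ?_, ?_⟩
  · rw [extChain_eq N (d + 1) (by omega)]
    rw [show (⟨d + 1, by omega⟩ : Fin (d + 2)) = Fin.last (d + 1) from by ext; simp]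
    exact hlast
  · intro m hm
    rw [extChain_eq N m (by omega)]
    have : (⟨m, by omega⟩ : Fin (d + 2)) = (⟨m, by omega⟩ : Fin (d + 1)).castSucc := by
      ext; simp
    rw [this]
    exact hstd _

theorem gfd_of_gfdN {M : ModuleCat.{0} S} {d : ℕ} (h : GfdLEN Q M d) : GfdLE S Q M d := by
  obtain ⟨N, f, ⟨hinj, hsurj, hex⟩, hN0, hcos⟩ := h
  refine ⟨fun i => N i.val, fun i => f i.val, ⟨?_, ?_, ?_⟩, ?_, ?_⟩
  · show Function.Injective (f ((0 : Fin (d + 1)).val))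
    rw [Fin.val_zero]
    exact hinj
  · show Function.Surjective (f ((Fin.last d).val))
    rw [Fin.val_last]
    exact hsurj
  · intro i
    exact hex i.val i.isLt
  · show N ((0 : Fin (d + 2)).val) = M
    rw [Fin.val_zero]
    exact hN0
  · intro i
    exact hcos (i.val + 1) (by omega) (by have := i.isLt; omega)

theorem wfd_of_wfdN {M : ModuleCat.{0} S} {d : ℕ} (h : WfdLEN Q M d) : WfdLE S Q M d := by
  obtain ⟨N, f, ⟨hinj, hsurj, hex⟩, hlast, hstd⟩ := h
  refine ⟨fun i => N i.val, fun i => f i.val, ⟨?_, ?_, ?_⟩, ?_, ?_⟩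
  · show Function.Injective (f ((0 : Fin (d + 1)).val))
    rw [Fin.val_zero]
    exact hinj
  · show Function.Surjective (f ((Fin.last d).val))
    rw [Fin.val_last]
    exact hsurj
  · intro i
    exact hex i.val i.isLt
  · show N ((Fin.last (d + 1)).val) = M
    rw [Fin.val_last]
    exact hlast
  · intro i
    exact hstd i.val (by have := i.isLt; omega)

end QHA

namespace QHA
open QHPaper
set_option linter.unusedSectionVars false
set_option maxHeartbeats 1000000

variable {k S : Type} [Field k] [Ring S] [Algebra k S] [FiniteDimensional k S]
variable {Λ : Type} [Fintype Λ] [PartialOrder Λ] {Q : QHData S Λ}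

theorem ker_equivComp {A B C : ModuleCat.{0} S} (e : ↥B ≃ₗ[S] ↥C) (g : ↥A →ₗ[S] ↥B) :
    LinearMap.ker ((e : ↥B →ₗ[S] ↥C) ∘ₗ g) = LinearMap.ker g := by
  ext x
  simp [LinearMap.mem_ker]

theorem range_compEquiv {A B C : ModuleCat.{0} S} (g : ↥A →ₗ[S] ↥B) (e : ↥C ≃ₗ[S] ↥A) :
    LinearMap.range (g ∘ₗ (e : ↥C →ₗ[S] ↥A)) = LinearMap.range g := by
  rw [LinearMap.range_comp, LinearEquiv.range, Submodule.map_top]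

theorem gfdN_zero_out {M : ModuleCat.{0} S} (h : GfdLEN Q M 0) :
    ∃ Y : ModuleCat.{0} S, InCostdFilt S Q Y ∧ Nonempty (↥M ≃ₗ[S] ↥Y) := by
  obtain ⟨N, f, ⟨hinj, hsurj, _⟩, hN0, hcos⟩ := h
  exact ⟨N 1, hcos 1 le_rfl le_rfl,
    ⟨(eqEquiv hN0.symm).trans (LinearEquiv.ofBijective (f 0) ⟨hinj, hsurj⟩)⟩⟩

theorem gfdN_zero_in {M Y : ModuleCat.{0} S} (hY : InCostdFilt S Q Y)
    (e : ↥M ≃ₗ[S] ↥Y) : GfdLEN Q M 0 := by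
  refine ⟨fun m => match m with | 0 => M | _ + 1 => Y,
    fun m => match m with
      | 0 => (e : ↥M →ₗ[S] ↥Y)
      | _ + 1 => LinearMap.id,
    ⟨e.injective, e.surjective, fun m hm => absurd hm (Nat.not_lt_zero m)⟩, rfl, ?_⟩
  intro m h1 h2
  have hm : m = 1 := by omega
  subst hm
  exact hY

theorem gfdN_cons {M Y X : ModuleCat.{0} S} (hY : InCostdFilt S Q Y)
    (hse : ShortEx M Y X) {d : ℕ} (hX : GfdLEN Q X d) : GfdLEN Q M (d + 1) := by
  obtain ⟨a, b, ha, hb, hab⟩ := hse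
  obtain ⟨N, f, ⟨hinj, hsurj, hex⟩, hN0, hcos⟩ := hX
  refine ⟨fun m => match m with | 0 => M | 1 => Y | (m + 2) => N (m + 1),
    fun m => match m with
      | 0 => a
      | 1 => f 0 ∘ₗ ((eqEquiv hN0.symm : ↥X ≃ₗ[S] ↥(N 0)) : ↥X →ₗ[S] ↥(N 0)) ∘ₗ b
      | (m + 2) => f (m + 1),
    ⟨ha, ?_, ?_⟩, rfl, ?_⟩
  · -- surjectivity of the last map
    match d with
    | 0 =>
      show Function.Surjective (f 0 ∘ₗ _ ∘ₗ b)
      rw [LinearMap.coe_comp, LinearMap.coe_comp]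
      exact hsurj.comp ((eqEquiv hN0.symm).surjective.comp hb)
    | (e + 1) =>
      show Function.Surjective (f (e + 1))
      exact hsurj
  · -- interior exactness
    intro m hm
    match m with
    | 0 =>
      show LinearMap.range a = LinearMap.ker (f 0 ∘ₗ _ ∘ₗ b)
      rw [hab]
      ext x
      simp only [LinearMap.mem_ker, LinearMap.comp_apply]
      constructor
      · intro h
        rw [h, map_zero, map_zero]
      · intro h
        have h1 : (eqEquiv hN0.symm) (b x) = 0 :=
          hinj (h.trans (map_zero (f 0)).symm)
        exact (eqEquiv hN0.symm).injective
          (h1.trans (map_zero (eqEquiv hN0.symm : ↥X →ₗ[S] ↥(N 0))).symm)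
    | 1 =>
      show LinearMap.range (f 0 ∘ₗ _ ∘ₗ b) = LinearMap.ker (f 1)
      rw [← hex 0 (by omega)]
      ext y
      constructor
      · rintro ⟨x, rfl⟩
        exact LinearMap.mem_range_self _ _
      · rintro ⟨z, rfl⟩
        obtain ⟨w, hw⟩ := hb ((eqEquiv hN0.symm).symm z)
        exact ⟨w, by simp [hw]⟩
    | (m + 2) =>
      show LinearMap.range (f (m + 1)) = LinearMap.ker (f (m + 2))
      exact hex (m + 1) (by omega)
  · intro m h1 h2
    match m, h1 with
    | 1, _ => exact hY
    | (m + 2), _ => exact hcos (m + 1) (by omega) (by omega)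

theorem gfdN_peel {M : ModuleCat.{0} S} {d : ℕ} (h : GfdLEN Q M (d + 1)) :
    ∃ X Y : ModuleCat.{0} S, InCostdFilt S Q Y ∧ ShortEx M Y X ∧ GfdLEN Q X d := by
  obtain ⟨N, f, ⟨hinj, hsurj, hex⟩, hN0, hcos⟩ := h
  refine ⟨ModuleCat.of S ↥(LinearMap.range (f 1)), N 1, hcos 1 (by omega) (by omega),
    ⟨f 0 ∘ₗ ((eqEquiv hN0.symm : ↥M ≃ₗ[S] ↥(N 0)) : ↥M →ₗ[S] ↥(N 0)),
      (f 1).rangeRestrict, ?_, ?_, ?_⟩, ?_⟩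
  · rw [LinearMap.coe_comp]
    exact hinj.comp (eqEquiv hN0.symm).injective
  · exact (f 1).surjective_rangeRestrict
  · rw [LinearMap.ker_rangeRestrict, range_compEquiv]
    exact hex 0 (by omega)
  · refine ⟨fun m => match m with
      | 0 => ModuleCat.of S ↥(LinearMap.range (f 1))
      | (m + 1) => N (m + 2),
      fun m => match m with
      | 0 => (LinearMap.range (f 1)).subtype
      | (m + 1) => f (m + 2),
      ⟨Submodule.injective_subtype _, ?_, ?_⟩, rfl, ?_⟩
    · match d with
      | 0 =>
        show Function.Surjective (LinearMap.range (f 1)).subtype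
        intro y
        exact ⟨⟨y, by rw [LinearMap.range_eq_top.mpr hsurj]; trivial⟩, rfl⟩
      | (e + 1) =>
        show Function.Surjective (f (e + 2))
        exact hsurj
    · intro m hm
      match m with
      | 0 =>
        show LinearMap.range (LinearMap.range (f 1)).subtype = LinearMap.ker (f 2)
        rw [Submodule.range_subtype]
        exact hex 1 (by omega)
      | (m + 1) =>
        show LinearMap.range (f (m + 2)) = LinearMap.ker (f (m + 3))
        exact hex (m + 2) (by omega)
    · intro m h1 h2
      match m, h1 with
      | (m + 1), _ => exact hcos (m + 2) (by omega) (by omega)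

end QHA

namespace QHA
open QHPaper
set_option linter.unusedSectionVars false
set_option linter.unusedTactic false
set_option maxHeartbeats 1000000

variable {k S : Type} [Field k] [Ring S] [Algebra k S] [FiniteDimensional k S]
variable {Λ : Type} [Fintype Λ] [PartialOrder Λ] {Q : QHData S Λ}

theorem wfdN_zero_out {M : ModuleCat.{0} S} (h : WfdLEN Q M 0) :
    ∃ Y : ModuleCat.{0} S, InStdFilt S Q Y ∧ Nonempty (↥Y ≃ₗ[S] ↥M) := by
  obtain ⟨N, f, ⟨hinj, hsurj, _⟩, hlast, hstd⟩ := h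
  exact ⟨N 0, hstd 0 le_rfl,
    ⟨(LinearEquiv.ofBijective (f 0) ⟨hinj, hsurj⟩).trans (eqEquiv hlast)⟩⟩

theorem wfdN_zero_in {M Y : ModuleCat.{0} S} (hY : InStdFilt S Q Y)
    (e : ↥Y ≃ₗ[S] ↥M) : WfdLEN Q M 0 := by
  refine ⟨fun m => match m with | 0 => Y | _ + 1 => M,
    fun m => match m with
      | 0 => (e : ↥Y →ₗ[S] ↥M)
      | _ + 1 => LinearMap.id,
    ⟨e.injective, e.surjective, fun m hm => absurd hm (Nat.not_lt_zero m)⟩, rfl, ?_⟩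
  intro m hm
  have : m = 0 := by omega
  subst this
  exact hY

theorem wfdN_snoc {X Y M : ModuleCat.{0} S} (hY : InStdFilt S Q Y)
    (hse : ShortEx X Y M) {d : ℕ} (hX : WfdLEN Q X d) : WfdLEN Q M (d + 1) := by
  obtain ⟨a, b, ha, hb, hab⟩ := hse
  obtain ⟨N, f, ⟨hinj, hsurj, hex⟩, hlast, hstd⟩ := hX
  have hNlt : ∀ m, m ≤ d →
      (if m ≤ d then N m else if m = d + 1 then Y else M) = N m := fun m h => if_pos h
  have hNY : (if d + 1 ≤ d then N (d + 1) else if d + 1 = d + 1 then Y else M) = Y := by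
    rw [if_neg (by omega), if_pos rfl]
  have hNM : ∀ m, d + 1 < m →
      (if m ≤ d then N m else if m = d + 1 then Y else M) = M := fun m h => by
    rw [if_neg (by omega), if_neg (by omega)]
  refine ⟨fun m => if m ≤ d then N m else if m = d + 1 then Y else M,
    fun m =>
      if h1 : m < d then
        conjMap (eqEquiv (hNlt m (by omega)).symm) (eqEquiv (hNlt (m + 1) (by omega)).symm) (f m)
      else if h2 : m = d then by
        subst h2
        exact conjMap (eqEquiv (hNlt m le_rfl).symm) (eqEquiv hNY.symm)
          (a ∘ₗ ((eqEquiv hlast : ↥(N (m + 1)) ≃ₗ[S] ↥X) : ↥(N (m + 1)) →ₗ[S] ↥X) ∘ₗ f m)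
      else if h3 : m = d + 1 then by
        subst h3
        exact conjMap (eqEquiv hNY.symm) (eqEquiv (hNM (d + 2) (by omega)).symm) b
      else 0,
    ⟨?_, ?_, ?_⟩, hNM (d + 2) (by omega), ?_⟩
  · -- injectivity of the first map
    beta_reduce
    rcases Nat.eq_zero_or_pos d with hd | hd
    · subst hd
      rw [dif_neg (by omega), dif_pos rfl]
      show Function.Injective (conjMap (eqEquiv (hNlt 0 le_rfl).symm) (eqEquiv hNY.symm)
        (a ∘ₗ ((eqEquiv hlast : ↥(N 1) ≃ₗ[S] ↥X) : ↥(N 1) →ₗ[S] ↥X) ∘ₗ f 0))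
      rw [conjMap_inj, LinearMap.coe_comp, LinearMap.coe_comp]
      exact ha.comp ((eqEquiv hlast).injective.comp hinj)
    · rw [dif_pos (by omega), conjMap_inj]
      exact hinj
  · -- surjectivity of the last map
    beta_reduce
    rw [dif_neg (by omega), dif_neg (by omega), dif_pos rfl]
    show Function.Surjective (conjMap (eqEquiv hNY.symm)
      (eqEquiv (hNM (d + 2) (by omega)).symm) b)
    rw [conjMap_surj]
    exact hb
  · -- interior exactness
    intro m hm
    beta_reduce
    by_cases h1 : m < d
    · by_cases h2 : m + 1 < d
      · rw [dif_pos h1, dif_pos h2]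
        exact conjMap_range_ker _ _ _ _ _ (hex m (by omega))
      · have h3 : m + 1 = d := by omega
        subst h3
        rw [dif_pos h1, dif_neg (by omega), dif_pos rfl]
        show LinearMap.range (conjMap (eqEquiv (hNlt m (by omega)).symm)
            (eqEquiv (hNlt (m + 1) (by omega)).symm) (f m))
          = LinearMap.ker (conjMap (eqEquiv (hNlt (m + 1) le_rfl).symm) (eqEquiv hNY.symm)
            (a ∘ₗ ((eqEquiv hlast : ↥(N (m + 2)) ≃ₗ[S] ↥X) : ↥(N (m + 2)) →ₗ[S] ↥X) ∘ₗ f (m + 1)))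
        apply conjMap_range_ker
        have hker : LinearMap.ker (a ∘ₗ ((eqEquiv hlast : ↥(N (m + 2)) ≃ₗ[S] ↥X) :
            ↥(N (m + 2)) →ₗ[S] ↥X) ∘ₗ f (m + 1)) = LinearMap.ker (f (m + 1)) := by
          ext x
          simp only [LinearMap.mem_ker, LinearMap.comp_apply]
          constructor
          · intro hz
            have h4 : (eqEquiv hlast) (f (m + 1) x) = 0 := ha (hz.trans (map_zero a).symm)
            exact (eqEquiv hlast).injective
              (h4.trans (map_zero (eqEquiv hlast : ↥(N (m + 2)) →ₗ[S] ↥X)).symm)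
          · intro hz
            rw [hz, map_zero, map_zero]
        rw [hker]
        exact hex m (by omega)
    · have h2 : m = d := by omega
      subst h2
      rw [dif_neg (by omega), dif_pos rfl, dif_neg (by omega), dif_neg (by omega), dif_pos rfl]
      show LinearMap.range (conjMap (eqEquiv (hNlt m le_rfl).symm) (eqEquiv hNY.symm)
          (a ∘ₗ ((eqEquiv hlast : ↥(N (m + 1)) ≃ₗ[S] ↥X) : ↥(N (m + 1)) →ₗ[S] ↥X) ∘ₗ f m))
        = LinearMap.ker (conjMap (eqEquiv hNY.symm) (eqEquiv (hNM (m + 2) (by omega)).symm) b)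
      apply conjMap_range_ker
      have hr : LinearMap.range (a ∘ₗ ((eqEquiv hlast : ↥(N (m + 1)) ≃ₗ[S] ↥X) :
          ↥(N (m + 1)) →ₗ[S] ↥X) ∘ₗ f m) = LinearMap.range a := by
        ext y
        constructor
        · rintro ⟨x, rfl⟩
          exact LinearMap.mem_range_self _ _
        · rintro ⟨z, rfl⟩
          obtain ⟨w, hw⟩ := hsurj ((eqEquiv hlast).symm z)
          exact ⟨w, by simp [hw]⟩
      rw [hr]
      exact hab
  · intro m hm
    beta_reduce
    by_cases h : m ≤ d
    · rw [hNlt m h]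
      exact hstd m h
    · have : m = d + 1 := by omega
      subst this
      rw [hNY]
      exact hY

theorem wfdN_peel {M : ModuleCat.{0} S} {d : ℕ} (h : WfdLEN Q M (d + 1)) :
    ∃ X Y : ModuleCat.{0} S, InStdFilt S Q Y ∧ ShortEx X Y M ∧ WfdLEN Q X d := by
  obtain ⟨N, f, ⟨hinj, hsurj, hex⟩, hlast, hstd⟩ := h
  have hrange : LinearMap.range (f d) = LinearMap.ker (f (d + 1)) := hex d (by omega)
  have hgt : ∀ m, d < m →
      (if m ≤ d then N m else ModuleCat.of S ↥(LinearMap.ker (f (d + 1))))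
        = ModuleCat.of S ↥(LinearMap.ker (f (d + 1))) := fun m h => if_neg (by omega)
  have hlt : ∀ m, m ≤ d →
      (if m ≤ d then N m else ModuleCat.of S ↥(LinearMap.ker (f (d + 1)))) = N m :=
    fun m h => if_pos h
  refine ⟨ModuleCat.of S ↥(LinearMap.ker (f (d + 1))), N (d + 1), hstd (d + 1) le_rfl,
    ⟨(LinearMap.ker (f (d + 1))).subtype,
      ((eqEquiv hlast : ↥(N (d + 2)) ≃ₗ[S] ↥M) : ↥(N (d + 2)) →ₗ[S] ↥M) ∘ₗ f (d + 1),
      Submodule.injective_subtype _, ?_, ?_⟩, ?_⟩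
  · rw [LinearMap.coe_comp]
    exact (eqEquiv hlast).surjective.comp hsurj
  · rw [Submodule.range_subtype, ker_equivComp]
  · refine ⟨fun m => if m ≤ d then N m else ModuleCat.of S ↥(LinearMap.ker (f (d + 1))),
      fun m =>
        if h1 : m < d then
          conjMap (eqEquiv (hlt m (by omega)).symm) (eqEquiv (hlt (m + 1) (by omega)).symm) (f m)
        else if h2 : m = d then by
          subst h2
          exact conjMap (eqEquiv (hlt m le_rfl).symm) (eqEquiv (hgt (m + 1) (by omega)).symm)
            (LinearMap.codRestrict (LinearMap.ker (f (m + 1))) (f m)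
              (fun x => by rw [← hrange]; exact LinearMap.mem_range_self _ x))
        else 0,
      ⟨?_, ?_, ?_⟩, hgt (d + 1) (by omega), ?_⟩
    · beta_reduce
      rcases Nat.eq_zero_or_pos d with hd | hd
      · subst hd
        rw [dif_neg (by omega), dif_pos rfl]
        show Function.Injective (conjMap (eqEquiv (hlt 0 le_rfl).symm)
          (eqEquiv (hgt 1 (by omega)).symm)
          (LinearMap.codRestrict (LinearMap.ker (f 1)) (f 0)
            (fun x => by rw [← hrange]; exact LinearMap.mem_range_self _ x)))
        rw [conjMap_inj]
        intro x y hxy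
        exact hinj (congrArg Subtype.val hxy)
      · rw [dif_pos (by omega), conjMap_inj]
        exact hinj
    · beta_reduce
      rw [dif_neg (by omega), dif_pos rfl]
      show Function.Surjective (conjMap (eqEquiv (hlt d le_rfl).symm)
        (eqEquiv (hgt (d + 1) (by omega)).symm)
        (LinearMap.codRestrict (LinearMap.ker (f (d + 1))) (f d)
          (fun x => by rw [← hrange]; exact LinearMap.mem_range_self _ x)))
      rw [conjMap_surj]
      rintro ⟨y, hy⟩
      rw [← hrange] at hy
      obtain ⟨x, hx⟩ := hy
      exact ⟨x, Subtype.ext hx⟩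
    · intro m hm
      beta_reduce
      by_cases h2 : m + 1 < d
      · rw [dif_pos (by omega), dif_pos h2]
        exact conjMap_range_ker _ _ _ _ _ (hex m (by omega))
      · have h3 : m + 1 = d := by omega
        subst h3
        rw [dif_pos (by omega), dif_neg (by omega), dif_pos rfl]
        show LinearMap.range (conjMap (eqEquiv (hlt m (by omega)).symm)
            (eqEquiv (hlt (m + 1) (by omega)).symm) (f m))
          = LinearMap.ker (conjMap (eqEquiv (hlt (m + 1) le_rfl).symm)
            (eqEquiv (hgt (m + 2) (by omega)).symm)
            (LinearMap.codRestrict (LinearMap.ker (f (m + 2))) (f (m + 1))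
              (fun x => by rw [← hrange]; exact LinearMap.mem_range_self _ x)))
        apply conjMap_range_ker
        rw [LinearMap.ker_codRestrict]
        exact hex m (by omega)
    · intro m hm
      beta_reduce
      rw [hlt m hm]
      exact hstd m (by omega)

end QHA

namespace QHA
open QHPaper
set_option linter.unusedSectionVars false
set_option maxHeartbeats 1000000

variable {k S : Type} [Field k] [Ring S] [Algebra k S] [FiniteDimensional k S]
variable {Λ : Type} [Fintype Λ] [PartialOrder Λ] {Q : QHData S Λ} (E : Duality S Q)

include k in
theorem gfd_to_wfd_D : ∀ {d : ℕ} {M : ModuleCat.{0} S}, Module.Finite S ↥M →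
    GfdLEN Q M d → WfdLEN Q (E.D M) d := by
  intro d
  induction d with
  | zero =>
    intro M hM h
    obtain ⟨Y, hY, ⟨e⟩⟩ := gfdN_zero_out h
    have hYfin := fin_of_incostd (k := k) E hY
    exact wfdN_zero_in (instd_D_of_incostd (k := k) E hY) (Dequiv E hM hYfin e)
  | succ d ih =>
    intro M hM h
    obtain ⟨X, Y, hY, ⟨a, b, ha, hb, hab⟩, hX⟩ := gfdN_peel h
    have hYfin : Module.Finite S ↥Y := fin_of_incostd (k := k) E hY
    have hXfin : Module.Finite S ↥X := by
      haveI := hYfin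
      exact Module.Finite.of_surjective b hb
    obtain ⟨h1, h2, h3⟩ := E.Dexact hM hYfin hXfin a b ha hb hab
    exact wfdN_snoc (instd_D_of_incostd (k := k) E hY)
      ⟨E.Dmap b, E.Dmap a, h1, h2, h3⟩ (ih hXfin hX)

include k in
theorem wfd_to_gfd_D : ∀ {d : ℕ} {M : ModuleCat.{0} S}, Module.Finite S ↥M →
    WfdLEN Q M d → GfdLEN Q (E.D M) d := by
  intro d
  induction d with
  | zero =>
    intro M hM h
    obtain ⟨Y, hY, ⟨e⟩⟩ := wfdN_zero_out h
    have hYfin := fin_of_instd (k := k) hY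
    exact gfdN_zero_in (incostd_D_of_instd (k := k) E hY) (Dequiv E hYfin hM e)
  | succ d ih =>
    intro M hM h
    obtain ⟨X, Y, hY, ⟨a, b, ha, hb, hab⟩, hX⟩ := wfdN_peel h
    have hYfin : Module.Finite S ↥Y := fin_of_instd (k := k) hY
    have hXfin : Module.Finite S ↥X := by
      haveI := QHA.fin_submodule k hYfin (LinearMap.range a)
      exact Module.Finite.equiv (LinearEquiv.ofInjective a ha).symm
    obtain ⟨h1, h2, h3⟩ := E.Dexact hXfin hYfin hM a b ha hb hab
    exact gfdN_cons (incostd_D_of_instd (k := k) E hY)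
      ⟨E.Dmap b, E.Dmap a, h1, h2, h3⟩ (ih hXfin hX)

theorem wfdN_congr {M M' : ModuleCat.{0} S} (e : ↥M ≃ₗ[S] ↥M') {d : ℕ}
    (h : WfdLEN Q M d) : WfdLEN Q M' d := by
  match d with
  | 0 =>
    obtain ⟨Y, hY, ⟨ey⟩⟩ := wfdN_zero_out h
    exact wfdN_zero_in hY (ey.trans e)
  | (d + 1) =>
    obtain ⟨X, Y, hY, ⟨a, b, ha, hb, hab⟩, hX⟩ := wfdN_peel h
    refine wfdN_snoc hY ⟨a, (e : ↥M →ₗ[S] ↥M') ∘ₗ b, ha, ?_, ?_⟩ hX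
    · rw [LinearMap.coe_comp]
      exact e.surjective.comp hb
    · rw [ker_equivComp]
      exact hab

theorem gfdN_congr {M M' : ModuleCat.{0} S} (e : ↥M ≃ₗ[S] ↥M') {d : ℕ}
    (h : GfdLEN Q M d) : GfdLEN Q M' d := by
  match d with
  | 0 =>
    obtain ⟨Y, hY, ⟨em⟩⟩ := gfdN_zero_out h
    exact gfdN_zero_in hY (e.symm.trans em)
  | (d + 1) =>
    obtain ⟨X, Y, hY, ⟨a, b, ha, hb, hab⟩, hX⟩ := gfdN_peel h
    refine gfdN_cons hY ⟨a ∘ₗ (e.symm : ↥M' →ₗ[S] ↥M), b, ?_, hb, ?_⟩ hX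
    · rw [LinearMap.coe_comp]
      exact ha.comp e.symm.injective
    · rw [range_compEquiv]
      exact hab

include k E in
theorem gfd_eq_wfd_L (lam : Λ) : gfd S Q (Q.L lam) = wfd S Q (Q.L lam) := by
  unfold gfd wfd
  congr 1
  ext d
  simp only [Set.mem_setOf_eq]
  obtain ⟨eL⟩ := E.DL lam
  constructor
  · intro h
    exact wfd_of_wfdN (wfdN_congr eL (gfd_to_wfd_D (k := k) E (Q.finiteL lam) (gfdN_of_gfd h)))
  · intro h
    exact gfd_of_gfdN (gfdN_congr eL (wfd_to_gfd_D (k := k) E (Q.finiteL lam) (wfdN_of_wfd h)))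

end QHA


end QHPaper

open QHPaper in
/-- Let `S` be a quasi-hereditary algebra with a simple-preserving duality
whose partial order is minimal for the quasi-hereditary structure. If `S` satisfies
property D, then property A holds if and only if property B holds. -/
theorem stmt15 (k S Λ : Type) [Field k] [Ring S] [Algebra k S] [FiniteDimensional k S]
    [Fintype Λ] [PartialOrder Λ]
    (QH : QHData S Λ) (dual : Duality S QH) (hmin : MinimalOrder S QH)
    (hD : PropD S QH) :
    PropA S QH ↔ PropB S QH := by
  constructor
  · intro hA mu lam hlt
    rw [hD mu, hD lam, ← QHA.gfd_eq_wfd_L (k := k) dual mu,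
      ← QHA.gfd_eq_wfd_L (k := k) dual lam]
    exact hA mu lam hlt
  · intro hB mu lam hlt
    rw [QHA.gfd_eq_wfd_L (k := k) dual mu, QHA.gfd_eq_wfd_L (k := k) dual lam,
      ← hD mu, ← hD lam]
    exact hB mu lam hlt
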